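/- arXiv:2311.03910 — 10 statements merged into one kernel-verified Lean document; each statement's English description precedes it below -/
import Mathlib

section
/- If x₁, …, x_N ∈ [0,1] are linearly independent over ℚ, then the set of vectors {(sin(ω·x₁), …, sin(ω·x_N)) : ω ∈ ℝ} is dense in the open cube (-1,1)^N. -/
/-!
Bohr's proof of Kronecker's theorem. Put `a = (0, x₁, …, x_N)`, `b = (0, θ₁, …, θ_N)` and
`g(t) = ∑ᵥ exp(i (t aᵥ - bᵥ))`. Since `0, x₁, …, x_N` are affinely independent over `ℚ`, the power
`g^p` is a trigonometric polynomial whose frequencies `∑ᵥ kᵥ aᵥ` (for `k` with `∑ᵥ kᵥ = p`) are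
pairwise distinct and whose coefficients have the multinomial coefficients as moduli. If `|g| ≤ r`,
averaging `|g^p|²` over `[0, T]` gives `∑ₖ multinomial(k)² ≤ r^(2p)`, whereas Cauchy–Schwarz gives
`∑ₖ multinomial(k)² ≥ (N+1)^(2p) / (p+1)^(N+1)`; letting `p → ∞` forces `r ≥ N + 1`. So `|g(t)|`
comes arbitrarily close to `N + 1`, which forces the unit vectors `exp(i (t aᵥ - bᵥ))` to cluster
around the one for `v = 0`, namely `1`. With `θₖ = arcsin yₖ` and `ω = t` this gives
`sin(ω xₖ) ≈ sin θₖ = yₖ`.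
-/

open Real Complex Finset ComplexConjugate

section TrigonometricPolynomial

variable {κ : Type*}

lemma norm_integral_exp_mul_I_le {ξ : ℝ} (hξ : ξ ≠ 0) (T : ℝ) :
    ‖∫ t in (0 : ℝ)..T, cexp (↑(t * ξ) * I)‖ ≤ 2 / |ξ| := by
  have hξI : (ξ : ℂ) * I ≠ 0 := mul_ne_zero (ofReal_ne_zero.mpr hξ) I_ne_zero
  have h : ∀ t : ℝ, cexp (↑(t * ξ) * I) = cexp (ξ * I * t) := fun t => by push_cast; ring_nf
  simp_rw [h]
  rw [integral_exp_mul_complex hξI, norm_div, norm_mul, norm_I, mul_one, norm_real,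
    Real.norm_eq_abs]
  gcongr
  calc _ ≤ ‖cexp (ξ * I * T)‖ + ‖cexp (ξ * I * (0 : ℝ))‖ := norm_sub_le _ _
    _ = 2 := by rw [← h, ← h, norm_exp_ofReal_mul_I, norm_exp_ofReal_mul_I]; norm_num

lemma ofReal_norm_sum_exp_sq (s : Finset κ) (ξ : κ → ℝ) (c : κ → ℂ) (t : ℝ) :
    ((‖∑ k ∈ s, c k * cexp (↑(t * ξ k) * I)‖ ^ 2 : ℝ) : ℂ) =
      ∑ k ∈ s, ∑ l ∈ s, c k * conj (c l) * cexp (↑(t * (ξ k - ξ l)) * I) := by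
  rw [ofReal_pow, ← mul_conj', map_sum, sum_mul_sum]
  refine sum_congr rfl fun k _ => sum_congr rfl fun l _ => ?_
  simp only [map_mul, ← exp_conj, conj_ofReal, conj_I]
  rw [mul_mul_mul_comm, ← Complex.exp_add]
  congr 2
  push_cast
  ring

lemma exists_mul_sum_norm_sq_sub_le_integral (s : Finset κ) {ξ : κ → ℝ} (hξ : Set.InjOn ξ s)
    (c : κ → ℂ) : ∃ K, ∀ T, T * ∑ k ∈ s, ‖c k‖ ^ 2 - K ≤
      ∫ t in (0 : ℝ)..T, ‖∑ k ∈ s, c k * cexp (↑(t * ξ k) * I)‖ ^ 2 := by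
  classical
  set K := ∑ k ∈ s, ∑ l ∈ s.erase k, ‖c k‖ * ‖c l‖ * (2 / |ξ k - ξ l|)
  refine ⟨K, fun T => ?_⟩
  set R := ∑ k ∈ s, ∑ l ∈ s.erase k,
    c k * conj (c l) * ∫ t in (0 : ℝ)..T, cexp (↑(t * (ξ k - ξ l)) * I)
  have hint : ∀ k l, IntervalIntegrable
      (fun t : ℝ => c k * conj (c l) * cexp (↑(t * (ξ k - ξ l)) * I)) MeasureTheory.volume 0 T :=
    fun k l => (by fun_prop : Continuous _).intervalIntegrable _ _
  have hsplit : ((∫ t in (0 : ℝ)..T, ‖∑ k ∈ s, c k * cexp (↑(t * ξ k) * I)‖ ^ 2 : ℝ) : ℂ) =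
      ((T * ∑ k ∈ s, ‖c k‖ ^ 2 : ℝ) : ℂ) + R := by
    rw [← intervalIntegral.integral_ofReal]
    simp_rw [ofReal_norm_sum_exp_sq]
    rw [intervalIntegral.integral_finsetSum fun k _ => ?_]
    · rw [ofReal_mul, ofReal_sum, mul_sum, ← sum_add_distrib]
      refine sum_congr rfl fun k hk => ?_
      rw [intervalIntegral.integral_finsetSum fun l _ => hint k l, ← add_sum_erase _ _ hk]
      simp [intervalIntegral.integral_const_mul, mul_conj']
    · exact (by fun_prop : Continuous _).intervalIntegrable _ _
  have hR : ‖R‖ ≤ K := by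
    refine (norm_sum_le _ _).trans (sum_le_sum fun k hk => (norm_sum_le _ _).trans
      (sum_le_sum fun l hl => ?_))
    have hkl : ξ k - ξ l ≠ 0 := sub_ne_zero.mpr fun h =>
      ne_of_mem_erase hl (hξ (mem_of_mem_erase hl) hk h.symm)
    rw [norm_mul, norm_mul, RCLike.norm_conj]
    gcongr
    exact norm_integral_exp_mul_I_le hkl T
  have hre := congrArg re hsplit
  rw [ofReal_re, add_re, ofReal_re] at hre
  linarith [abs_le.mp ((abs_re_le_norm R).trans hR)]

theorem sum_norm_sq_le_of_norm_sum_exp_le (s : Finset κ) {ξ : κ → ℝ} (hξ : Set.InjOn ξ s)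
    (c : κ → ℂ) {M : ℝ} (hM : ∀ t ≥ 0, ‖∑ k ∈ s, c k * cexp (↑(t * ξ k) * I)‖ ≤ M) :
    ∑ k ∈ s, ‖c k‖ ^ 2 ≤ M ^ 2 := by
  obtain ⟨K, hK⟩ := exists_mul_sum_norm_sq_sub_le_integral s hξ c
  have hupper : ∀ T ≥ 0,
      ∫ t in (0 : ℝ)..T, ‖∑ k ∈ s, c k * cexp (↑(t * ξ k) * I)‖ ^ 2 ≤ T * M ^ 2 := by
    intro T hT
    calc _ ≤ ∫ t in (0 : ℝ)..T, M ^ 2 :=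
          intervalIntegral.integral_mono_on hT
            ((by fun_prop : Continuous _).intervalIntegrable _ _) intervalIntegrable_const
            fun t ht => pow_le_pow_left₀ (norm_nonneg _) (hM t ht.1) 2
      _ = T * M ^ 2 := by simp
  by_contra! h
  set T := (K + 1) / (∑ k ∈ s, ‖c k‖ ^ 2 - M ^ 2)
  have hgap : 0 < ∑ k ∈ s, ‖c k‖ ^ 2 - M ^ 2 := sub_pos.mpr h
  have hT : T * (∑ k ∈ s, ‖c k‖ ^ 2 - M ^ 2) = K + 1 := div_mul_cancel₀ _ hgap.ne'
  have hK0 : 0 ≤ K := by linarith [hK 0, hupper 0 le_rfl]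
  linarith [hK T, hupper T (div_nonneg (by linarith) hgap.le)]

end TrigonometricPolynomial

lemma exists_pow_mul_pow_lt_one {r : ℝ} (hr0 : 0 ≤ r) (hr1 : r < 1) (m : ℕ) :
    ∃ p : ℕ, ((p : ℝ) + 1) ^ m * r ^ p < 1 := by
  rcases hr0.eq_or_lt with rfl | hr0
  · exact ⟨1, by simp⟩
  have hlim : Filter.Tendsto (fun p : ℕ => ((p : ℝ) + 1) ^ m * r ^ (p + 1) / r)
      Filter.atTop (nhds 0) := by
    simpa using ((tendsto_pow_const_mul_const_pow_of_abs_lt_one m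
      (abs_lt.mpr ⟨by linarith, hr1⟩)).comp (Filter.tendsto_add_atTop_nat 1)).div_const r
  obtain ⟨p, hp⟩ := (hlim.eventually (gt_mem_nhds one_pos)).exists
  refine ⟨p, ?_⟩
  rwa [pow_succ, ← mul_assoc, mul_div_assoc, div_self hr0.ne', mul_one] at hp

section Bohr

variable {ι : Type*} [Fintype ι] [DecidableEq ι]

lemma sum_exp_pow (a b : ι → ℝ) (t : ℝ) (p : ℕ) :
    (∑ v, cexp (↑(t * a v - b v) * I)) ^ p =
      ∑ k ∈ piAntidiag univ p, (Nat.multinomial univ k * cexp (↑(-∑ v, k v * b v) * I)) *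
        cexp (↑(t * ∑ v, k v * a v) * I) := by
  rw [sum_pow_eq_sum_piAntidiag]
  refine sum_congr rfl fun k _ => ?_
  rw [mul_assoc, ← Complex.exp_add]
  simp_rw [← Complex.exp_nat_mul, ← Complex.exp_sum]
  congr 2
  push_cast
  rw [mul_sum, ← sum_neg_distrib, ← add_mul, ← sum_add_distrib, sum_mul]
  exact sum_congr rfl fun v _ => by ring

lemma AffineIndependent.injOn_sum_mul {a : ι → ℝ} (ha : AffineIndependent ℚ a) (p : ℕ) :
    Set.InjOn (fun k : ι → ℕ => ∑ v, k v * a v) (piAntidiag (univ : Finset ι) p) := by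
  intro k hk l hl hkl
  have hw : ∑ v, ((k v : ℚ) - l v) = 0 := by
    rw [sum_sub_distrib, sub_eq_zero]
    exact_mod_cast (mem_piAntidiag.mp hk).1.trans (mem_piAntidiag.mp hl).1.symm
  have hcomb : univ.weightedVSub a (fun v => (k v : ℚ) - l v) = (0 : ℝ) := by
    rw [weightedVSub_eq_linear_combination _ hw]
    simp only [Rat.smul_def, Rat.cast_sub, Rat.cast_natCast, sub_mul, sum_sub_distrib]
    exact sub_eq_zero.mpr hkl
  funext v
  exact_mod_cast sub_eq_zero.mp ((affineIndependent_iff_of_fintype ℚ a).mp ha _ hw hcomb v)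

lemma card_piAntidiag_univ_le (p : ℕ) :
    #(piAntidiag (univ : Finset ι) p) ≤ (p + 1) ^ Fintype.card ι := by
  calc #(piAntidiag univ p) ≤ #(Fintype.piFinset fun _ : ι => range (p + 1)) := by
        refine card_le_card fun k hk => Fintype.mem_piFinset.mpr fun v => mem_range.mpr ?_
        rw [Nat.lt_succ_iff, ← (mem_piAntidiag.mp hk).1]
        exact single_le_sum (fun _ _ => Nat.zero_le _) (mem_univ v)
    _ = (p + 1) ^ Fintype.card ι := by simp

lemma sum_multinomial_piAntidiag_univ (p : ℕ) :
    ∑ k ∈ piAntidiag (univ : Finset ι) p, Nat.multinomial univ k = Fintype.card ι ^ p := by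
  simpa using (sum_pow_eq_sum_piAntidiag (univ : Finset ι) (fun _ => (1 : ℕ)) p).symm

lemma AffineIndependent.card_pow_le_of_norm_sum_exp_le {a : ι → ℝ} (ha : AffineIndependent ℚ a)
    (b : ι → ℝ) {r : ℝ} (hr : ∀ t, ‖∑ v, cexp (↑(t * a v - b v) * I)‖ ≤ r) (p : ℕ) :
    (Fintype.card ι : ℝ) ^ (2 * p) ≤ ((p : ℝ) + 1) ^ Fintype.card ι * r ^ (2 * p) := by
  set s := piAntidiag (univ : Finset ι) p
  set m : (ι → ℕ) → ℝ := fun k => Nat.multinomial univ k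
  have hsq : ∑ k ∈ s, m k ^ 2 ≤ (r ^ p) ^ 2 := by
    have := sum_norm_sq_le_of_norm_sum_exp_le s (ha.injOn_sum_mul p)
      (fun k => Nat.multinomial univ k * cexp (↑(-∑ v, k v * b v) * I)) (M := r ^ p)
      fun t _ => by rw [← sum_exp_pow, norm_pow]; exact pow_le_pow_left₀ (norm_nonneg _) (hr t) p
    simpa only [norm_mul, Complex.norm_natCast, norm_exp_ofReal_mul_I, mul_one] using this
  calc (Fintype.card ι : ℝ) ^ (2 * p) = (∑ k ∈ s, m k) ^ 2 := by
        rw [mul_comm, pow_mul, ← Nat.cast_pow, ← sum_multinomial_piAntidiag_univ p]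
        push_cast
        rfl
    _ ≤ #s * ∑ k ∈ s, m k ^ 2 := sq_sum_le_card_mul_sum_sq
    _ ≤ ((p : ℝ) + 1) ^ Fintype.card ι * r ^ (2 * p) := by
        rw [mul_comm 2, pow_mul]
        gcongr
        exact_mod_cast card_piAntidiag_univ_le p

end Bohr

theorem AffineIndependent.exists_card_sub_lt_norm_sum_exp {ι : Type*} [Fintype ι] {a : ι → ℝ}
    (ha : AffineIndependent ℚ a) (b : ι → ℝ) {δ : ℝ} (hδ : 0 < δ) :
    ∃ t : ℝ, (Fintype.card ι : ℝ) - δ < ‖∑ v, cexp (↑(t * a v - b v) * I)‖ := by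
  classical
  by_contra! h
  set n : ℝ := (Fintype.card ι : ℝ)
  have hr0 : 0 ≤ n - δ := (norm_nonneg _).trans (h 0)
  have hn : 0 < n := by linarith
  have hρ : (n - δ) / n < 1 := (div_lt_one hn).mpr (by linarith)
  obtain ⟨p, hp⟩ := exists_pow_mul_pow_lt_one (by positivity)
    (pow_lt_one₀ (by positivity) hρ two_ne_zero) (Fintype.card ι)
  rw [← pow_mul, div_pow, ← mul_div_assoc, div_lt_one (by positivity)] at hp
  linarith [ha.card_pow_le_of_norm_sum_exp_le b h p]

lemma norm_sub_le_of_card_sub_le_norm_sum {ι : Type*} [Fintype ι] {z : ι → ℂ}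
    (hz : ∀ v, ‖z v‖ = 1) {δ : ℝ} (h : (Fintype.card ι : ℝ) - δ ≤ ‖∑ v, z v‖) (v w : ι) :
    ‖z v - z w‖ ≤ 2 * √(2 * δ) := by
  set u := cexp (↑(-arg (∑ v, z v)) * I)
  have hu : ‖u‖ = 1 := norm_exp_ofReal_mul_I _
  have huz : ∀ v, ‖u * z v‖ = 1 := fun v => by rw [norm_mul, hu, hz, one_mul]
  have huS : u * ∑ v, z v = ‖∑ v, z v‖ := by
    conv_lhs => rw [← norm_mul_exp_arg_mul_I (∑ v, z v)]
    rw [mul_left_comm, ← Complex.exp_add]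
    push_cast
    simp
  have hre : ∀ v, 1 - δ ≤ (u * z v).re := by
    intro v
    have hle : ∀ w, 0 ≤ 1 - (u * z w).re := fun w =>
      sub_nonneg.mpr ((re_le_norm _).trans (huz w).le)
    have hsum : ∑ w, (1 - (u * z w).re) ≤ δ := by
      rw [sum_sub_distrib, ← re_sum, ← mul_sum, huS, ofReal_re]
      simp only [sum_const, card_univ, nsmul_eq_mul, mul_one]
      linarith
    linarith [single_le_sum (fun w _ => hle w) (mem_univ v)]
  have hclose : ∀ v, ‖u * z v - 1‖ ≤ √(2 * δ) := by
    intro v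
    refine Real.le_sqrt_of_sq_le ?_
    have h1 := congrArg (· ^ 2) (huz v)
    simp only [Complex.sq_norm, normSq_apply, sub_re, sub_im, one_re, one_im] at h1 ⊢
    nlinarith [hre v]
  calc ‖z v - z w‖ = ‖(u * z v - 1) - (u * z w - 1)‖ := by
        rw [sub_sub_sub_cancel_right, ← mul_sub, norm_mul, hu, one_mul]
    _ ≤ ‖u * z v - 1‖ + ‖u * z w - 1‖ := norm_sub_le _ _
    _ ≤ 2 * √(2 * δ) := by linarith [hclose v, hclose w]

lemma LinearIndependent.affineIndependent_optionElim {k V ι : Type*} [Ring k] [AddCommGroup V]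
    [Module k V] {x : ι → V} (hx : LinearIndependent k x) :
    AffineIndependent k (fun v : Option ι => v.elim 0 x) := by
  rw [affineIndependent_iff_linearIndependent_vsub k _ none]
  convert hx.comp (fun v : {v : Option ι // v ≠ none} => v.1.get (Option.ne_none_iff_isSome.mp v.2))
    fun v w hvw => Subtype.ext (Option.get_inj.mp hvw) with ⟨_ | v, hv⟩
  · exact absurd rfl hv
  · simp

theorem LinearIndependent.exists_forall_norm_exp_sub_one_lt {ι : Type*} [Fintype ι] {x : ι → ℝ}
    (hx : LinearIndependent ℚ x) (θ : ι → ℝ) {ε : ℝ} (hε : 0 < ε) :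
    ∃ t : ℝ, ∀ k, ‖cexp (↑(t * x k - θ k) * I) - 1‖ < ε := by
  obtain ⟨t, ht⟩ := hx.affineIndependent_optionElim.exists_card_sub_lt_norm_sum_exp
    (fun v => v.elim 0 θ) (δ := ε ^ 2 / 16) (by positivity)
  refine ⟨t, fun k => ?_⟩
  have hk := norm_sub_le_of_card_sub_le_norm_sum (fun _ => norm_exp_ofReal_mul_I _) ht.le
    (some k) none
  simp only [Option.elim_some, Option.elim_none, mul_zero, sub_zero, ofReal_zero, zero_mul,
    Complex.exp_zero] at hk
  have hsqrt : √(2 * (ε ^ 2 / 16)) < ε / 2 := (Real.sqrt_lt' (half_pos hε)).mpr (by nlinarith)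
  linarith

lemma abs_sin_sub_sin_le_norm_exp_sub_one (a b : ℝ) :
    |Real.sin a - Real.sin b| ≤ ‖cexp (↑(a - b) * I) - 1‖ := by
  calc |Real.sin a - Real.sin b| = |(cexp (a * I) - cexp (b * I)).im| := by
        rw [sub_im, exp_ofReal_mul_I_im, exp_ofReal_mul_I_im]
    _ ≤ ‖cexp (a * I) - cexp (b * I)‖ := abs_im_le_norm _
    _ = ‖cexp (↑(a - b) * I) - 1‖ := by
        rw [← one_mul ‖cexp (↑(a - b) * I) - 1‖, ← norm_exp_ofReal_mul_I b, ← norm_mul, mul_sub,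
          mul_one, ← Complex.exp_add]
        congr 3
        push_cast
        ring

theorem sine_dense_in_cube_general
    (N : ℕ) (x : Fin N → ℝ)
    (hind : LinearIndependent ℚ x) :
    ∀ y : Fin N → ℝ, (∀ k, y k ∈ Set.Ioo (-1 : ℝ) 1) →
      ∀ ε > 0, ∃ ω : ℝ, ∀ k, |Real.sin (ω * x k) - y k| < ε := by
  intro y hy ε hε
  obtain ⟨ω, hω⟩ := hind.exists_forall_norm_exp_sub_one_lt (fun k => arcsin (y k)) hε
  refine ⟨ω, fun k => ?_⟩
  calc |Real.sin (ω * x k) - y k| = |Real.sin (ω * x k) - Real.sin (arcsin (y k))| := by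
        rw [sin_arcsin (hy k).1.le (hy k).2.le]
    _ ≤ ‖cexp (↑(ω * x k - arcsin (y k)) * I) - 1‖ := abs_sin_sub_sin_le_norm_exp_sub_one _ _
    _ < ε := hω k

theorem sine_dense_in_cube
    (N : ℕ) (x : Fin N → ℝ)
    (hx : ∀ k, x k ∈ Set.Icc (0 : ℝ) 1)
    (hind : LinearIndependent ℚ x) :
    ∀ y : Fin N → ℝ, (∀ k, y k ∈ Set.Ioo (-1 : ℝ) 1) →
      ∀ ε > 0, ∃ ω : ℝ, ∀ k, |Real.sin (ω * x k) - y k| < ε :=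
  sine_dense_in_cube_general N x hind
end

section
/- If x₁, …, x_N ∈ [0,1] are linearly independent over ℚ, then for any y₁,…,y_N ∈ ℝ and any ε > 0 there exist c, ω ∈ ℝ such that |c·sin(ω·xₖ) − yₖ| < ε for all k = 1,…,N. -/
/-!
Put `z_k := Circle.exp (arcsin (y_k / c))` with `c > max |y_k|`; then `|c sin(ω x_k) - y_k|` is at
most `c · dist (Circle.exp (ω x_k)) z_k`, so it suffices that the curve `ω ↦ (Circle.exp (ω x_k))_k`
is dense in the torus (Kronecker). This follows Bohr: if the curve stayed `δ`-far from `z`, the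
exponential sum `p(ω) = ∏_k ((1 + z_k⁻¹ e^{i ω x_k}) / 2)^n` would satisfy `|p|² ≤ (1 - δ²/4)^n`
everywhere. By `ℚ`-independence its frequencies `∑_k m_k x_k` are distinct, so the mean of `|p|²`
over `[0, T]` tends to the sum of the squared coefficients, which is `(C(2n, n) / 4^n)^N ≥ (2n)^{-N}`.
For large `n` this exceeds `(1 - δ²/4)^n`.
-/

open Real
open Finset Filter ComplexConjugate Function

section ExpSum

variable {ι : Type*} [Fintype ι]

lemma continuous_circleExp_mul (lam : ℝ) :
    Continuous fun ω : ℝ => (Circle.exp (lam * ω) : ℂ) := by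
  fun_prop

lemma norm_integral_circleExp_mul_le {lam : ℝ} (hlam : lam ≠ 0) (T : ℝ) :
    ‖∫ ω in (0 : ℝ)..T, (Circle.exp (lam * ω) : ℂ)‖ ≤ 2 / |lam| := by
  have hc : (lam : ℂ) * Complex.I ≠ 0 := by simp [hlam]
  have hint : ∫ ω in (0 : ℝ)..T, (Circle.exp (lam * ω) : ℂ) =
      (Circle.exp (lam * T) - Circle.exp (lam * 0)) / (lam * Complex.I) := by
    rw [intervalIntegral.integral_congr (g := fun ω : ℝ => Complex.exp (lam * Complex.I * ω))
      fun ω _ => by simp only [Circle.coe_exp]; push_cast; ring_nf, integral_exp_mul_complex hc]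
    simp only [Circle.coe_exp]
    push_cast
    ring_nf
  rw [hint, norm_div, Complex.norm_mul, Complex.norm_real, Complex.norm_I, mul_one,
    Real.norm_eq_abs]
  gcongr
  calc _ ≤ ‖(Circle.exp (lam * T) : ℂ)‖ + ‖(Circle.exp (lam * 0) : ℂ)‖ := norm_sub_le _ _
    _ = 2 := by rw [Circle.norm_coe, Circle.norm_coe]; norm_num

lemma norm_sq_sum_mul_circleExp (c : ι → ℂ) (lam : ι → ℝ) (ω : ℝ) :
    ((‖∑ i, c i * Circle.exp (lam i * ω)‖ ^ 2 : ℝ) : ℂ) =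
      ∑ i, ∑ j, c i * conj (c j) * Circle.exp ((lam i - lam j) * ω) := by
  rw [Complex.ofReal_pow, ← Complex.mul_conj', map_sum, sum_mul_sum]
  refine sum_congr rfl fun i _ => sum_congr rfl fun j _ => ?_
  rw [map_mul (starRingEnd ℂ), ← Circle.coe_inv_eq_conj, sub_mul, Circle.exp_sub,
    Circle.coe_div, Circle.coe_inv]
  ring

theorem exists_abs_integral_norm_sq_sum_mul_circleExp_sub_le {lam : ι → ℝ}
    (hlam : Injective lam) (c : ι → ℂ) : ∃ K, ∀ T,
      |(∫ ω in (0 : ℝ)..T, ‖∑ i, c i * Circle.exp (lam i * ω)‖ ^ 2) - T * ∑ i, ‖c i‖ ^ 2| ≤ K := by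
  classical
  -- On the diagonal `2 / |lam i - lam i| = 2 / 0 = 0`, matching the vanishing error term there.
  refine ⟨∑ i, ∑ j, ‖c i‖ * ‖c j‖ * (2 / |lam i - lam j|), fun T => ?_⟩
  set I : ι → ι → ℂ := fun i j => ∫ ω in (0 : ℝ)..T, (Circle.exp ((lam i - lam j) * ω) : ℂ)
  have hI : ∀ i j, ‖I i j - if i = j then (T : ℂ) else 0‖ ≤ 2 / |lam i - lam j| := by
    intro i j
    by_cases hij : i = j
    · simp [I, hij]
    · rw [if_neg hij, sub_zero]
      exact norm_integral_circleExp_mul_le (sub_ne_zero.2 (hlam.ne hij)) T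
  have hcont : ∀ i j, Continuous fun ω : ℝ => c i * conj (c j) *
      (Circle.exp ((lam i - lam j) * ω) : ℂ) := fun i j =>
    continuous_const.mul (continuous_circleExp_mul _)
  have hmean : ((∫ ω in (0 : ℝ)..T, ‖∑ i, c i * Circle.exp (lam i * ω)‖ ^ 2 : ℝ) : ℂ) =
      ∑ i, ∑ j, c i * conj (c j) * I i j := by
    rw [← intervalIntegral.integral_ofReal]
    simp only [norm_sq_sum_mul_circleExp, I, ← intervalIntegral.integral_const_mul]
    rw [intervalIntegral.integral_finsetSum fun i _ =>
      (continuous_finsetSum univ fun j _ => hcont i j).intervalIntegrable 0 T]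
    exact sum_congr rfl fun i _ => intervalIntegral.integral_finsetSum fun j _ =>
      (hcont i j).intervalIntegrable 0 T
  have hdiag : ((T * ∑ i, ‖c i‖ ^ 2 : ℝ) : ℂ) =
      ∑ i, ∑ j, c i * conj (c j) * if i = j then (T : ℂ) else 0 := by
    simp only [mul_ite, mul_zero, sum_ite_eq, mem_univ, if_true, Complex.mul_conj', mul_sum]
    push_cast
    exact sum_congr rfl fun i _ => by ring
  rw [← Real.norm_eq_abs, ← Complex.norm_real, Complex.ofReal_sub, hmean, hdiag,
    ← sum_sub_distrib]
  refine norm_sum_le_of_le _ fun i _ => ?_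
  rw [← sum_sub_distrib]
  refine norm_sum_le_of_le _ fun j _ => ?_
  rw [← mul_sub, norm_mul, norm_mul, Complex.norm_conj]
  gcongr
  exact hI i j

theorem exists_lt_norm_sq_sum_mul_circleExp {lam : ι → ℝ} (hlam : Injective lam) (c : ι → ℂ)
    {B : ℝ} (hB : B < ∑ i, ‖c i‖ ^ 2) :
    ∃ ω, B < ‖∑ i, c i * Circle.exp (lam i * ω)‖ ^ 2 := by
  by_contra! hf
  obtain ⟨K, hK⟩ := exists_abs_integral_norm_sq_sum_mul_circleExp_sub_le hlam c
  set T := (K + 1) / (∑ i, ‖c i‖ ^ 2 - B)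
  have hT : T * (∑ i, ‖c i‖ ^ 2 - B) = K + 1 := div_mul_cancel₀ _ (sub_pos.2 hB).ne'
  have hK0 : 0 ≤ K := (abs_nonneg _).trans (hK 0)
  have hT0 : 0 ≤ T := div_nonneg (by linarith) (sub_pos.2 hB).le
  have hcont : Continuous fun ω => ‖∑ i, c i * Circle.exp (lam i * ω)‖ ^ 2 :=
    ((continuous_finsetSum _ fun i _ =>
      continuous_const.mul (continuous_circleExp_mul _)).norm).pow 2
  have hint : ∫ ω in (0 : ℝ)..T, ‖∑ i, c i * Circle.exp (lam i * ω)‖ ^ 2 ≤ T * B := by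
    calc _ ≤ ∫ _ in (0 : ℝ)..T, B := intervalIntegral.integral_mono_on hT0
          (hcont.intervalIntegrable 0 T) intervalIntegrable_const fun ω _ => hf ω
      _ = T * B := by simp
  linarith [(abs_le.1 (hK T)).1]

end ExpSum

section Binomial

lemma one_add_div_two_pow (u : ℂ) (n : ℕ) :
    ((1 + u) / 2) ^ n = ∑ j : Fin (n + 1), ((n.choose j / 2 ^ n : ℝ) : ℂ) * u ^ (j : ℕ) := by
  rw [div_pow, add_comm, add_pow,
    Fin.sum_univ_eq_sum_range (fun j => ((n.choose j / 2 ^ n : ℝ) : ℂ) * u ^ j), sum_div]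
  refine sum_congr rfl fun j _ => ?_
  push_cast
  ring

lemma sum_sq_choose_div_two_pow (n : ℕ) :
    ∑ j : Fin (n + 1), ((n.choose j / 2 ^ n : ℝ)) ^ 2 = n.centralBinom / 4 ^ n := by
  rw [Fin.sum_univ_eq_sum_range (fun j => ((n.choose j / 2 ^ n : ℝ)) ^ 2),
    Nat.centralBinom_eq_two_mul_choose, ← Nat.sum_range_choose_sq]
  push_cast
  rw [sum_div]
  refine sum_congr rfl fun j _ => ?_
  rw [show (4 : ℝ) ^ n = (2 ^ n) ^ 2 by rw [← pow_mul, mul_comm, pow_mul]; norm_num]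
  ring

lemma inv_two_mul_le_centralBinom_div_four_pow {n : ℕ} (hn : 0 < n) :
    (2 * n : ℝ)⁻¹ ≤ n.centralBinom / 4 ^ n := by
  rw [inv_le_iff_one_le_mul₀' (by positivity), mul_div, le_div_iff₀ (by positivity), one_mul]
  exact_mod_cast Nat.four_pow_le_two_mul_self_mul_centralBinom n hn

lemma eventually_pow_lt_inv_two_mul_pow (N : ℕ) {r : ℝ} (hr0 : 0 ≤ r) (hr1 : r < 1) :
    ∀ᶠ n : ℕ in atTop, r ^ n < (2 * n : ℝ)⁻¹ ^ N := by
  have h := (tendsto_pow_const_mul_const_pow_of_abs_lt_one N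
    (abs_lt.2 ⟨by linarith, hr1⟩)).const_mul (2 ^ N)
  rw [mul_zero] at h
  filter_upwards [h.eventually (gt_mem_nhds one_pos), eventually_gt_atTop 0] with n hn hn0
  rw [inv_pow, ← one_div, lt_div_iff₀ (by positivity), mul_pow]
  linarith

end Binomial

section UnitCircle

lemma Circle.dist_eq_norm_coe_sub (u z : Circle) : dist u z = ‖(u : ℂ) - z‖ := by
  rw [← dist_eq_norm]
  rfl

lemma Circle.dist_eq_norm_one_sub_inv_mul (u z : Circle) :
    dist u z = ‖1 - ((z⁻¹ * u : Circle) : ℂ)‖ := by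
  have h : 1 - ((z⁻¹ * u : Circle) : ℂ) = ((z⁻¹ : Circle) : ℂ) * (z - u) := by
    rw [Circle.coe_mul, Circle.coe_inv, mul_sub, inv_mul_cancel₀ (Circle.coe_ne_zero z)]
  rw [h, norm_mul, Circle.norm_coe, one_mul, ← norm_neg, neg_sub, Circle.dist_eq_norm_coe_sub]

lemma abs_sin_sub_sin_le_dist_circleExp (a b : ℝ) :
    |Real.sin a - Real.sin b| ≤ dist (Circle.exp a) (Circle.exp b) := by
  have h : Real.sin a - Real.sin b = ((Circle.exp a : ℂ) - Circle.exp b).im := by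
    simp only [Circle.coe_exp, Complex.sub_im, Complex.exp_ofReal_mul_I_im]
  rw [h, Circle.dist_eq_norm_coe_sub]
  exact Complex.abs_im_le_norm _

lemma norm_one_add_coe_div_two_sq (u : Circle) :
    ‖(1 + (u : ℂ)) / 2‖ ^ 2 = 1 - ‖1 - (u : ℂ)‖ ^ 2 / 4 := by
  have h := parallelogram_law_with_norm ℝ (1 : ℂ) u
  rw [norm_div, Circle.norm_coe, norm_one] at *
  norm_num at *
  linarith

lemma norm_one_add_coe_div_two_le_one (u : Circle) : ‖(1 + (u : ℂ)) / 2‖ ≤ 1 := by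
  rw [norm_div]
  calc _ ≤ (‖(1 : ℂ)‖ + ‖(u : ℂ)‖) / ‖(2 : ℂ)‖ := by gcongr; exact norm_add_le _ _
    _ = 1 := by rw [norm_one, Circle.norm_coe]; norm_num

end UnitCircle

section Kronecker

variable {ι : Type*} [Fintype ι]

lemma injective_sum_natCast_mul {x : ι → ℝ} (hx : LinearIndependent ℚ x) :
    Injective fun m : ι → ℕ => ∑ k, (m k : ℝ) * x k := by
  intro m m' h
  simp only [← nsmul_eq_mul] at h
  exact funext (Fintype.linearIndependent_iffₛ.1 (hx.restrict_scalars' ℕ) m m' h)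

lemma prod_one_add_mul_circleExp_div_two_pow [DecidableEq ι] (a : ι → ℂ) (x : ι → ℝ) (n : ℕ)
    (ω : ℝ) :
    ∏ k, ((1 + a k * Circle.exp (ω * x k)) / 2) ^ n =
      ∑ m : ι → Fin (n + 1), (∏ k, ((n.choose (m k) / 2 ^ n : ℝ) : ℂ) * a k ^ (m k : ℕ)) *
        Circle.exp ((∑ k, ((m k : ℕ) : ℝ) * x k) * ω) := by
  simp only [one_add_div_two_pow, Fintype.prod_sum]
  refine sum_congr rfl fun m _ => ?_
  simp only [mul_pow, Circle.coe_exp, ← Complex.exp_nat_mul, ← mul_assoc]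
  rw [prod_mul_distrib, ← Complex.exp_sum]
  push_cast
  rw [sum_mul, sum_mul]
  congr 2
  exact sum_congr rfl fun k _ => by ring

lemma sum_norm_sq_prod_choose_div_mul_pow [DecidableEq ι] {a : ι → ℂ} (ha : ∀ k, ‖a k‖ = 1)
    (n : ℕ) :
    ∑ m : ι → Fin (n + 1), ‖∏ k, ((n.choose (m k) / 2 ^ n : ℝ) : ℂ) * a k ^ (m k : ℕ)‖ ^ 2 =
      (n.centralBinom / 4 ^ n : ℝ) ^ Fintype.card ι := by
  simp only [norm_prod, norm_mul, norm_pow, ha, one_pow, mul_one, Complex.norm_real,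
    Real.norm_eq_abs, ← prod_pow, sq_abs]
  rw [← Fintype.prod_sum (fun (_ : ι) (j : Fin (n + 1)) => ((n.choose j / 2 ^ n : ℝ)) ^ 2),
    prod_const, card_univ, sum_sq_choose_div_two_pow]

lemma norm_sq_prod_one_add_coe_div_two_pow_le (u : ι → Circle) (n : ℕ) {δ : ℝ} (hδ : 0 ≤ δ)
    (k : ι) (hk : δ ≤ ‖1 - (u k : ℂ)‖) :
    ‖∏ j, ((1 + (u j : ℂ)) / 2) ^ n‖ ^ 2 ≤ (1 - δ ^ 2 / 4) ^ n := by
  classical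
  have hprod : ‖∏ j, ((1 + (u j : ℂ)) / 2) ^ n‖ ≤ ‖(1 + (u k : ℂ)) / 2‖ ^ n := by
    rw [norm_prod, ← mul_prod_erase univ _ (mem_univ k), norm_pow]
    refine mul_le_of_le_one_right (by positivity) (prod_le_one (fun _ _ => by positivity)
      fun j _ => ?_)
    rw [norm_pow]
    exact pow_le_one₀ (norm_nonneg _) (norm_one_add_coe_div_two_le_one (u j))
  calc _ ≤ (‖(1 + (u k : ℂ)) / 2‖ ^ 2) ^ n := by
        rw [← pow_mul, mul_comm, pow_mul]; gcongr
    _ ≤ (1 - δ ^ 2 / 4) ^ n := by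
        gcongr
        rw [norm_one_add_coe_div_two_sq]
        gcongr

theorem dense_range_circleExp_mul {x : ι → ℝ} (hx : LinearIndependent ℚ x) :
    Dense (Set.range fun ω : ℝ => fun k => Circle.exp (ω * x k)) := by
  classical
  refine Metric.dense_iff.2 fun z ε hε => ?_
  set δ := min ε 1
  suffices ∃ ω, ∀ k, dist (Circle.exp (ω * x k)) (z k) < δ by
    obtain ⟨ω, hω⟩ := this
    exact ⟨_, (dist_pi_lt_iff hε).2 fun k => (hω k).trans_le (min_le_left _ _), ω, rfl⟩
  have hδ : 0 < δ := lt_min hε one_pos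
  have hδ1 : δ ≤ 1 := min_le_right _ _
  set r := 1 - δ ^ 2 / 4 with hr
  obtain ⟨n, hn0, hrn⟩ : ∃ n : ℕ, 0 < n ∧ r ^ n < (2 * n : ℝ)⁻¹ ^ Fintype.card ι :=
    ((eventually_gt_atTop 0).and (eventually_pow_lt_inv_two_mul_pow _
      (by rw [hr]; nlinarith) (by rw [hr]; nlinarith))).exists
  set c : (ι → Fin (n + 1)) → ℂ := fun m =>
    ∏ k, ((n.choose (m k) / 2 ^ n : ℝ) : ℂ) * ((z k)⁻¹ : Circle) ^ (m k : ℕ)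
  have hlam : Injective fun m : ι → Fin (n + 1) => ∑ k, ((m k : ℕ) : ℝ) * x k :=
    (injective_sum_natCast_mul hx).comp Fin.val_injective.comp_left
  have hmean : r ^ n < ∑ m, ‖c m‖ ^ 2 := by
    rw [sum_norm_sq_prod_choose_div_mul_pow fun k => Circle.norm_coe _]
    exact hrn.trans_le (pow_le_pow_left₀ (by positivity)
      (inv_two_mul_le_centralBinom_div_four_pow hn0) _)
  obtain ⟨ω, hω⟩ := exists_lt_norm_sq_sum_mul_circleExp hlam c hmean
  refine ⟨ω, fun k => not_le.1 fun hk => hω.not_ge ?_⟩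
  have := norm_sq_prod_one_add_coe_div_two_pow_le (fun j => (z j)⁻¹ * Circle.exp (ω * x j)) n
    hδ.le k (by rwa [← Circle.dist_eq_norm_one_sub_inv_mul])
  simpa only [Circle.coe_mul, prod_one_add_mul_circleExp_div_two_pow] using this

end Kronecker

theorem single_sine_wave_finite_approx_general
    (N : ℕ) (x : Fin N → ℝ)
    (hind : LinearIndependent ℚ x)
    (y : Fin N → ℝ) (ε : ℝ) (hε : 0 < ε) :
    ∃ c ω : ℝ, ∀ k, |c * Real.sin (ω * x k) - y k| < ε := by
  set c := ‖y‖ + 1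
  have hc : 0 < c := by positivity
  have hy : ∀ k, |y k / c| ≤ 1 := fun k => by
    rw [abs_div, abs_of_pos hc, div_le_one hc, ← Real.norm_eq_abs]
    linarith [norm_le_pi_norm y k]
  obtain ⟨_, hω, ω, rfl⟩ := Metric.dense_iff.1 (dense_range_circleExp_mul hind)
    (fun k => Circle.exp (Real.arcsin (y k / c))) (ε / c) (div_pos hε hc)
  refine ⟨c, ω, fun k => ?_⟩
  have hyk : c * Real.sin (Real.arcsin (y k / c)) = y k := by
    rw [Real.sin_arcsin (abs_le.1 (hy k)).1 (abs_le.1 (hy k)).2, mul_div_cancel₀ _ hc.ne']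
  calc |c * Real.sin (ω * x k) - y k|
      = |c * Real.sin (ω * x k) - c * Real.sin (Real.arcsin (y k / c))| := by rw [hyk]
    _ = c * |Real.sin (ω * x k) - Real.sin (Real.arcsin (y k / c))| := by
        rw [← mul_sub, abs_mul, abs_of_pos hc]
    _ < c * (ε / c) := by
        gcongr
        exact (abs_sin_sub_sin_le_dist_circleExp _ _).trans_lt
          ((dist_pi_lt_iff (div_pos hε hc)).1 hω k)
    _ = ε := mul_div_cancel₀ _ hc.ne'

theorem single_sine_wave_finite_approx
    (N : ℕ) (x : Fin N → ℝ)
    (hx : ∀ k, x k ∈ Set.Icc (0 : ℝ) 1)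
    (hind : LinearIndependent ℚ x)
    (y : Fin N → ℝ) (ε : ℝ) (hε : 0 < ε) :
    ∃ c ω : ℝ, ∀ k, |c * Real.sin (ω * x k) - y k| < ε :=
  single_sine_wave_finite_approx_general N x hind y ε hε
end

section
/- For every g of the form g(x) = Σₙ₌₁^N cₙ·sin(ωₙ·x + hₙ) (with real parameters cₙ, ωₙ, hₙ), every x₀ ∈ ℝ, and every choice of reals α₀,…,α_{2N} and β₀,…,β_{2N}, the (2N+1)×(2N+1) matrix A with entries A_{k,m} = g(x₀ + αₖ + βₘ) is singular, i.e. det A = 0. -/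
/-!
Since `sin (ω (a + b) + h) = sin (ω a + h) cos (ω b) + cos (ω a + h) sin (ω b)`, the kernel
`(a, b) ↦ g (a + b)` is a sum of `2N` products `u(a) v(b)`. Hence the matrix
`g (x₀ + αₖ + βₘ)` factors through `ℝ^(2N)` and has rank at most `2N < 2N + 1`.
-/

open Real

theorem Matrix.det_mul_eq_zero_of_card_lt {m ι K : Type*} [Fintype m] [DecidableEq m]
    [Fintype ι] [Field K] (B : Matrix m ι K) (C : Matrix ι m K)
    (h : Fintype.card ι < Fintype.card m) : (B * C).det = 0 := by
  by_contra hdet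
  have hrank : (B * C).rank = Fintype.card m :=
    (B * C).rank_of_isUnit ((isUnit_iff_isUnit_det _).mpr (isUnit_iff_ne_zero.mpr hdet))
  have := (rank_mul_le_left B C).trans (rank_le_card_width B)
  omega

theorem Matrix.det_eq_zero_of_eq_sum_mul {m ι K : Type*} [Fintype m] [DecidableEq m]
    [Fintype ι] [Field K] (A : Matrix m m K) (u : m → ι → K) (v : ι → m → K)
    (hA : ∀ k j, A k j = ∑ s, u k s * v s j) (h : Fintype.card ι < Fintype.card m) :
    A.det = 0 := by
  have hfac : A = Matrix.of u * Matrix.of v := by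
    ext k j
    simp only [hA, Matrix.mul_apply, Matrix.of_apply]
  rw [hfac]
  exact det_mul_eq_zero_of_card_lt _ _ h

theorem sum_mul_sin_add_eq_sum_sum_elim {N : ℕ} (c ω h : Fin N → ℝ) (a b : ℝ) :
    ∑ n, c n * sin (ω n * (a + b) + h n) =
      ∑ s : Fin N ⊕ Fin N,
        Sum.elim (fun n => c n * sin (ω n * a + h n)) (fun n => c n * cos (ω n * a + h n)) s *
          Sum.elim (fun n => cos (ω n * b)) (fun n => sin (ω n * b)) s := by
  rw [Fintype.sum_sum_type, ← Finset.sum_add_distrib]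
  refine Finset.sum_congr rfl fun n _ => ?_
  rw [show ω n * (a + b) + h n = (ω n * a + h n) + ω n * b by ring, sin_add]
  simp only [Sum.elim_inl, Sum.elim_inr]
  ring

theorem det_vanishes_for_sine_sums
    (N : ℕ) (c ω h : Fin N → ℝ) (x₀ : ℝ)
    (α β : Fin (2 * N + 1) → ℝ)
    (g : ℝ → ℝ)
    (hg : ∀ x, g x = ∑ n, c n * Real.sin (ω n * x + h n)) :
    Matrix.det (fun k m : Fin (2 * N + 1) => g (x₀ + α k + β m)) = 0 := by
  refine Matrix.det_eq_zero_of_eq_sum_mul _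
    (fun k => Sum.elim (fun n => c n * sin (ω n * (x₀ + α k) + h n))
      (fun n => c n * cos (ω n * (x₀ + α k) + h n)))
    (fun s m => Sum.elim (fun n => cos (ω n * β m)) (fun n => sin (ω n * β m)) s)
    (fun k m => by rw [hg, sum_mul_sin_add_eq_sum_sum_elim]) ?_
  simp only [Fintype.card_sum, Fintype.card_fin]
  omega
end

section
/- Let α₀,…,α_{2N} be pairwise distinct reals and β₀,…,β_{2N} be pairwise distinct reals. Then the polynomial det((z_{k,m})_{k,m=0}^{2N}), viewed as a polynomial in formal variables z_{k,m} where variables z_{k,m} and z_{k',m'} are identified whenever αₖ+βₘ = α_{k'}+β_{m'}, is a nonzero polynomial; in particular it contains the monomial ∏ₖ z_{k,k} (corresponding to the diagonal with sorted αₖ, βₘ) with coefficient 1. -/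
/-!
In the Leibniz expansion, the permutation `σ` contributes `± ∏ᵢ z_{α (σ i) + β i}`. When `α` and
`β` increase, this monomial is the diagonal one only for `σ = 1`: equal multisets of sums have
equal sums of squares, hence `∑ α (σ i) β i = ∑ α i β i`, and the equality case of the
rearrangement inequality makes `σ` monotone. For arbitrary injective `α`, `β`, sorting permutes
the rows and columns, which changes the determinant only by a sign.
-/

open MvPolynomial

section

variable {ι : Type*} [LinearOrder ι] [Fintype ι] {α β : ι → ℝ}

theorem Equiv.Perm.eq_one_of_sum_single_add_eq (hα : StrictMono α) (hβ : StrictMono β)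
    {σ : Equiv.Perm ι}
    (h : (∑ i, Finsupp.single (α (σ i) + β i) 1 : ℝ →₀ ℕ) = ∑ i, Finsupp.single (α i + β i) 1) :
    σ = 1 := by
  have hsq : ∑ i, (α (σ i) + β i) ^ 2 = ∑ i, (α i + β i) ^ 2 := by
    simpa [map_sum, Finsupp.linearCombination_single] using
      congrArg (Finsupp.linearCombination ℕ fun x : ℝ => x ^ 2) h
  have hsq_perm : ∑ i, α (σ i) ^ 2 = ∑ i, α i ^ 2 := Equiv.sum_comp σ fun i => α i ^ 2
  have hmul : ∑ i, α (σ i) * β i = ∑ i, α i * β i := by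
    simp only [add_sq, Finset.sum_add_distrib, mul_assoc, ← Finset.mul_sum] at hsq
    linarith
  have hmono : Monovary (α ∘ σ) β :=
    (hα.monotone.monovary hβ.monotone).sum_comp_perm_mul_eq_sum_mul_iff.mp hmul
  have hσ : StrictMono σ := fun i j hij =>
    lt_of_le_of_ne (hα.le_iff_le.mp (hmono (hβ hij))) (σ.injective.ne hij.ne)
  exact Equiv.ext fun i => hσ.apply_eq

theorem coeff_det_X_add_of_strictMono {R : Type*} [CommRing R]
    (hα : StrictMono α) (hβ : StrictMono β) :
    coeff (∑ k, Finsupp.single (α k + β k) 1)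
      (Matrix.of fun k m => (X (α k + β m) : MvPolynomial ℝ R)).det = 1 := by
  have hprod (σ : Equiv.Perm ι) : ∏ i, (X (α (σ i) + β i) : MvPolynomial ℝ R) =
      monomial (∑ i, Finsupp.single (α (σ i) + β i) 1) 1 :=
    (monomial_sum_one _ _).symm
  simp only [Matrix.det_apply, Matrix.of_apply, hprod, coeff_sum]
  rw [Finset.sum_eq_single 1]
  · simp
  · intro σ _ hσ
    rw [Units.smul_def, coeff_smul, coeff_monomial,
      if_neg (mt (Equiv.Perm.eq_one_of_sum_single_add_eq hα hβ) hσ), smul_zero]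
  · simp

end

theorem det_X_add_ne_zero {R : Type*} [CommRing R] [Nontrivial R] {n : ℕ} {α β : Fin n → ℝ}
    (hα : Function.Injective α) (hβ : Function.Injective β) :
    (Matrix.of fun k m => (X (α k + β m) : MvPolynomial ℝ R)).det ≠ 0 := by
  set σ := Tuple.sort α
  set τ := Tuple.sort β
  have hσ : StrictMono (α ∘ σ) :=
    (Tuple.monotone_sort α).strictMono_of_injective (hα.comp σ.injective)
  have hτ : StrictMono (β ∘ τ) :=
    (Tuple.monotone_sort β).strictMono_of_injective (hβ.comp τ.injective)
  intro h0
  have hsorted :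
      (Matrix.of fun k m => (X ((α ∘ σ) k + (β ∘ τ) m) : MvPolynomial ℝ R)).det = 0 := by
    change (((Matrix.of fun k m => (X (α k + β m) : MvPolynomial ℝ R)).submatrix id τ).submatrix
      σ id).det = 0
    rw [Matrix.det_permute, Matrix.det_permute', h0, mul_zero, mul_zero]
  have hcoeff := coeff_det_X_add_of_strictMono (R := R) hσ hτ
  rw [hsorted, coeff_zero] at hcoeff
  exact zero_ne_one hcoeff

theorem det_polynomial_nonzero
    (N : ℕ) (α β : Fin (2 * N + 1) → ℝ)
    (hα : Function.Injective α) (hβ : Function.Injective β) :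
    Matrix.det (fun k m : Fin (2 * N + 1) => (X (α k + β m) : MvPolynomial ℝ ℝ)) ≠ 0 ∧
    (StrictMono α → StrictMono β →
      MvPolynomial.coeff (∑ k : Fin (2 * N + 1), Finsupp.single (α k + β k) 1)
        (Matrix.det (fun k m : Fin (2 * N + 1) => (X (α k + β m) : MvPolynomial ℝ ℝ))) = 1) :=
  ⟨det_X_add_ne_zero hα hβ, coeff_det_X_add_of_strictMono⟩
end

section
/- For a nontrivial arithmetic progression xₖ = u + v·k (v ≠ 0), k = 0,…,4, and any c, ω ∈ ℝ: the identity sin(a+(k−1)b) + sin(a+(k+1)b) = 2·sin(a+kb)·cos(b) holds for all reals a, b, k, and it rules out the sign pattern (+,+,+,−,+) of (c·sin(ωx₀),…,c·sin(ωx₄)), i.e. c·sin(ωxₖ) > 0 for k ∈ {0,1,2,4} and c·sin(ωx₃) < 0 cannot hold simultaneously. -/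
open Real

theorem sine_sign_pattern_impossible :
    (∀ a b k : ℝ,
      Real.sin (a + (k - 1) * b) + Real.sin (a + (k + 1) * b)
        = 2 * Real.sin (a + k * b) * Real.cos b) ∧
    (∀ u v c ω : ℝ, v ≠ 0 →
      ¬ (0 < c * Real.sin (ω * (u + v * 0)) ∧
         0 < c * Real.sin (ω * (u + v * 1)) ∧
         0 < c * Real.sin (ω * (u + v * 2)) ∧
         c * Real.sin (ω * (u + v * 3)) < 0 ∧
         0 < c * Real.sin (ω * (u + v * 4)))) := by
  have key : ∀ a b k : ℝ,
      Real.sin (a + (k - 1) * b) + Real.sin (a + (k + 1) * b)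
        = 2 * Real.sin (a + k * b) * Real.cos b := by
    intro a b k
    have h1 : a + (k - 1) * b = (a + k * b) - b := by ring
    have h2 : a + (k + 1) * b = (a + k * b) + b := by ring
    have s1 := Real.sin_sub (a + k * b) b
    have s2 := Real.sin_add (a + k * b) b
    rw [h1, h2, s1, s2]
    ring
  refine ⟨key, ?_⟩
  intro u v c ω hv ⟨h0, h1, h2, h3, h4⟩
  have E : ∀ k : ℝ, ω * (u + v * k) = ω * u + k * (ω * v) := by intro k; ring
  rw [E 0] at h0; rw [E 1] at h1; rw [E 2] at h2; rw [E 3] at h3; rw [E 4] at h4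
  have hrec : ∀ k : ℝ,
      c * Real.sin (ω * u + (k - 1) * (ω * v)) + c * Real.sin (ω * u + (k + 1) * (ω * v))
        = 2 * (c * Real.sin (ω * u + k * (ω * v))) * Real.cos (ω * v) := by
    intro k
    have h := key (ω * u) (ω * v) k
    linear_combination c * h
  have r1 := hrec 1
  have r3 := hrec 3
  norm_num at r1 r3 h0 h1 h2 h3 h4
  have hkey : (c * Real.sin (ω * u + ω * v)) *
        (c * Real.sin (ω * u + 2 * (ω * v)) + c * Real.sin (ω * u + 4 * (ω * v)))
      = (c * Real.sin (ω * u + 3 * (ω * v))) *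
        (c * Real.sin (ω * u) + c * Real.sin (ω * u + 2 * (ω * v))) := by
    linear_combination (c * Real.sin (ω * u + ω * v)) * r3
      - (c * Real.sin (ω * u + 3 * (ω * v))) * r1
  nlinarith [hkey, h0, h1, h2, h3, h4, mul_pos h2 h4]
end

section
/- For every m ∈ ℕ and reals ω, h, x one has x^m·sin(ωx + h) = limit as Δω → 0 of Δω^{−m}·Σₙ₌₀^m (−1)^{m−n}·C(m,n)·sin((ω + nΔω)x + h − πm/2), and the convergence is uniform for x in any compact interval. -/
/-!
By the binomial theorem and `exp (-π m i / 2) = (-i) ^ m`, the sum is the imaginary part of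
`exp ((ωx + h) i) * (-i (exp (Δx i) - 1)) ^ m`. Writing `exp (t i) - 1 = t * d t` with
`d = dslope (s ↦ exp (s i)) 0`, which is continuous with `d 0 = i`, the quotient by `Δ ^ m`
is `Im (exp ((ωx + h) i) * (-i x d (Δx)) ^ m)` for `Δ ≠ 0`. This is jointly continuous in
`(Δ, x)` and equals `x ^ m sin (ωx + h)` at `Δ = 0`, and joint continuity gives uniform
convergence on compacts.
-/

open Filter Finset Topology

theorem Continuous.tendstoUniformlyOn_of_isCompact {α β γ : Type*} [UniformSpace α]
    [WeaklyLocallyCompactSpace α] [UniformSpace β] [UniformSpace γ] {f : α → β → γ}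
    (hf : Continuous ↿f) {K : Set β} (hK : IsCompact K) (x : α) :
    TendstoUniformlyOn f (f x) (𝓝 x) K := by
  obtain ⟨L, hL, hxL⟩ := exists_compact_mem_nhds x
  have := (hL.prod hK).uniformContinuousOn_of_continuous hf.continuousOn
  simpa only [nhdsWithin_eq_nhds.2 hxL] using this.tendstoUniformlyOn (mem_of_mem_nhds hxL)

namespace Complex

theorem sum_alternating_choose_mul_sin (m : ℕ) (θ t : ℝ) :
    ∑ n ∈ range (m + 1), (-1 : ℝ) ^ (m - n) * m.choose n * Real.sin (θ + n * t)
      = (exp (θ * I) * (exp (t * I) - 1) ^ m).im := by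
  rw [sub_eq_add_neg, add_pow, mul_sum, im_sum]
  refine sum_congr rfl fun n _ => ?_
  have hexp : exp (θ * I) * exp (t * I) ^ n = exp (↑(θ + n * t) * I) := by
    rw [← exp_nat_mul, ← exp_add]; push_cast; ring_nf
  have hcoef :
      (-1 : ℂ) ^ (m - n) * (m.choose n : ℂ) = ((-1 : ℝ) ^ (m - n) * m.choose n : ℝ) := by
    push_cast; rfl
  rw [← exp_ofReal_mul_I_im, ← mul_assoc, ← mul_assoc, hexp, mul_assoc (exp _), hcoef,
    im_mul_ofReal, mul_comm]

theorem exp_sub_pi_mul_div_two_mul_I (m : ℕ) (θ : ℝ) :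
    exp (↑(θ - Real.pi * m / 2) * I) = exp (θ * I) * (-I) ^ m := by
  rw [← exp_neg_pi_div_two_mul_I, ← exp_nat_mul, ← exp_add]
  push_cast; ring_nf

theorem exp_mul_I_sub_one_eq_mul_dslope (t : ℝ) :
    exp (t * I) - 1 = t * dslope (fun s : ℝ ↦ exp (s * I)) 0 t := by
  simpa using (sub_smul_dslope (fun s : ℝ ↦ exp (s * I)) 0 t).symm

theorem hasDerivAt_exp_ofReal_mul_I (t : ℝ) :
    HasDerivAt (fun s : ℝ ↦ exp (s * I)) (exp (t * I) * I) t := by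
  simpa using ((hasDerivAt_id t).ofReal_comp.mul_const I).cexp

theorem dslope_exp_mul_I_zero : dslope (fun s : ℝ ↦ exp (s * I)) 0 0 = I := by
  simpa using (hasDerivAt_exp_ofReal_mul_I 0).deriv

theorem continuous_dslope_exp_mul_I : Continuous (dslope (fun s : ℝ ↦ exp (s * I)) 0) :=
  continuousOn_univ.1 <| (continuousOn_dslope univ_mem).2
    ⟨by fun_prop, (hasDerivAt_exp_ofReal_mul_I 0).differentiableAt⟩

theorem sum_alternating_choose_mul_sin_div_pow_eq_im (m : ℕ) (ω h x : ℝ) {Δ : ℝ}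
    (hΔ : Δ ≠ 0) :
    (∑ n ∈ range (m + 1), (-1 : ℝ) ^ (m - n) * m.choose n *
        Real.sin ((ω + n * Δ) * x + h - Real.pi * m / 2)) / Δ ^ m
      = (exp (↑(ω * x + h) * I) *
          (x * (-I * dslope (fun s : ℝ ↦ exp (s * I)) 0 (Δ * x))) ^ m).im := by
  have hsum := sum_alternating_choose_mul_sin m (ω * x + h - Real.pi * m / 2) (Δ * x)
  rw [exp_sub_pi_mul_div_two_mul_I, exp_mul_I_sub_one_eq_mul_dslope] at hsum
  rw [div_eq_iff (pow_ne_zero m hΔ), ← im_mul_ofReal, ofReal_pow]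
  convert hsum using 2
  · congr 2; ring
  · push_cast; ring

end Complex

theorem resonance_uniform_limit
    (m : ℕ) (ω h a b : ℝ) :
    TendstoUniformlyOn
      (fun (Δ : ℝ) (x : ℝ) =>
        (∑ n ∈ Finset.range (m + 1),
          (-1 : ℝ) ^ (m - n) * (m.choose n : ℝ) *
            Real.sin ((ω + n * Δ) * x + h - Real.pi * m / 2)) / Δ ^ m)
      (fun x : ℝ => x ^ m * Real.sin (ω * x + h))
      (nhdsWithin (0 : ℝ) {0}ᶜ)
      (Set.Icc a b) := by
  set D := dslope (fun s : ℝ ↦ Complex.exp (s * Complex.I)) 0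
  set F : ℝ → ℝ → ℝ := fun Δ x ↦
    (Complex.exp (↑(ω * x + h) * Complex.I) * (x * (-Complex.I * D (Δ * x))) ^ m).im
  have hD := Complex.continuous_dslope_exp_mul_I
  have hF : Continuous ↿F := by fun_prop
  have hF0 : F 0 = fun x ↦ x ^ m * Real.sin (ω * x + h) := by
    ext x
    dsimp only [F, D]
    rw [zero_mul, Complex.dslope_exp_mul_I_zero, neg_mul, Complex.I_mul_I, neg_neg, mul_one,
      ← Complex.ofReal_pow, Complex.im_mul_ofReal, Complex.exp_ofReal_mul_I_im, mul_comm]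
  have hlim := hF.tendstoUniformlyOn_of_isCompact (isCompact_Icc (a := a) (b := b)) 0
  rw [hF0] at hlim
  refine TendstoUniformlyOn.congr (fun u hu ↦ (hlim u hu).filter_mono nhdsWithin_le_nhds) ?_
  filter_upwards [self_mem_nhdsWithin] with Δ hΔ x _
  exact (Complex.sum_alternating_choose_mul_sin_div_pow_eq_im m ω h x hΔ).symm
end

section
/- There exists a constant C = C(M, Ω) (one may take C = 2^{M(M+1)}(1+Ω)^{M·max(n, M−1)}) such that for every f(x) = Σₙ₌₁^M cₙe^{iωₙx} with all |ωₙ| ≤ Ω and every n ≥ 1, max_{x∈[0,1]} |f^{(n)}(x)| ≤ 2^{M(M+1)}(1+Ω)^{M·max(n,M−1)} · max_{x∈[0,1]} |f(x)|. -/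
/-!
Since `f⁽ⁿ⁾(x) = ∑ cₖ (iωₖ)ⁿ e^{iωₖx}` and `(iωₖ)ⁿ = g(e^{iωₖδ})` for `g(z) = (log z / δ)ⁿ`,
expanding `g` in Newton form at the nodes `vᵢ = e^{iωᵢδ}` writes `f⁽ⁿ⁾(x)` as
`∑_{j<M} g[v₀, …, vⱼ] · (∏_{i<j} (T_δ - vᵢ) f)(x)`, where `T_δ` is translation by `δ`.
The `j`-th iterated difference only samples `f` at `x, x + δ, …, x + jδ`, so it is at most
`(2 + Ω|δ|)ʲ sup_{[0,1]} |f|`, and Hermite's contour integral over `|z - 1| = R` bounds the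
divided differences by Cauchy's estimate. Taking `|δ| ≍ 1 / (M (1 + Ω))`, with `R = 1/2` when
`n < M - 1` and `R = 2Ω|δ|` otherwise, produces the constant.
-/

open Complex Finset Metric
open scoped Real

theorem sum_prod_sub_div_prod_sub {K : Type*} [Field K] (v : ℕ → K) {w z : K} (N : ℕ)
    (hz : ∀ i < N, z ≠ v i) (hzw : z ≠ w) :
    ∑ j ∈ range N, (∏ i ∈ range j, (w - v i)) / ∏ i ∈ range (j + 1), (z - v i)
      = (1 - (∏ i ∈ range N, (w - v i)) / ∏ i ∈ range N, (z - v i)) / (z - w) := by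
  induction N with
  | zero => simp
  | succ N ih =>
    have hprod : ∏ i ∈ range N, (z - v i) ≠ 0 :=
      prod_ne_zero_iff.2 fun i hi => sub_ne_zero.2 (hz i (by simp at hi; omega))
    have hN : z - v N ≠ 0 := sub_ne_zero.2 (hz N N.lt_succ_self)
    have hzw' : z - w ≠ 0 := sub_ne_zero.2 hzw
    rw [sum_range_succ, ih fun i hi => hz i (by omega), prod_range_succ, prod_range_succ]
    field_simp
    ring

/-- Hermite's contour-integral formula for the divided difference `g[v 0, …, v j]`. -/
noncomputable def contourDividedDiff (g : ℂ → ℂ) (c : ℂ) (R : ℝ) (v : ℕ → ℂ) (j : ℕ) : ℂ :=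
  (2 * π * I)⁻¹ • ∮ z in C(c, R), g z / ∏ i ∈ range (j + 1), (z - v i)

section DividedDifference

variable {g : ℂ → ℂ} {c : ℂ} {R : ℝ} {v : ℕ → ℂ}

theorem eq_sum_prod_mul_contourDividedDiff {N l : ℕ}
    (hg : DifferentiableOn ℂ g (closedBall c R)) (hv : ∀ i < N, v i ∈ ball c R) (hl : l < N) :
    g (v l) = ∑ j ∈ range N, (∏ i ∈ range j, (v l - v i)) * contourDividedDiff g c R v j := by
  have hR : 0 < R := pos_of_mem_ball (hv l hl)
  have hne : ∀ z ∈ sphere c R, ∀ i < N, z ≠ v i := by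
    rintro z hz i hi rfl
    exact (mem_sphere.1 hz).not_lt (hv i hi)
  have hint : ∀ j ∈ range N, CircleIntegrable
      (fun z => (∏ i ∈ range j, (v l - v i)) * (g z / ∏ i ∈ range (j + 1), (z - v i))) c R := by
    intro j hj
    refine ContinuousOn.circleIntegrable hR.le (continuousOn_const.mul ?_)
    refine (hg.continuousOn.mono sphere_subset_closedBall).div (by fun_prop) fun z hz => ?_
    exact prod_ne_zero_iff.2 fun i hi =>
      sub_ne_zero.2 (hne z hz i (by simp at hi hj; omega))
  have hkernel : Set.EqOn (fun z => ∑ j ∈ range N,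
        (∏ i ∈ range j, (v l - v i)) * (g z / ∏ i ∈ range (j + 1), (z - v i)))
      (fun z => (z - v l)⁻¹ • g z) (sphere c R) := by
    intro z hz
    have hvanish : ∏ i ∈ range N, (v l - v i) = 0 := prod_eq_zero (mem_range.2 hl) (sub_self _)
    have := sum_prod_sub_div_prod_sub v N (hne z hz) (hne z hz l hl)
    rw [hvanish, zero_div, sub_zero, one_div] at this
    simp only [smul_eq_mul, ← this, sum_mul]
    exact sum_congr rfl fun j _ => by ring
  have hcauchy := (hg.mono closure_ball_subset_closedBall).diffContOnCl
    |>.two_pi_i_inv_smul_circleIntegral_sub_inv_smul (hv l hl)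
  rw [← hcauchy, ← circleIntegral.integral_congr hR.le hkernel,
    circleIntegral.integral_fun_sum hint]
  simp only [contourDividedDiff, circleIntegral.integral_const_mul, smul_eq_mul, mul_sum]
  exact sum_congr rfl fun j _ => by ring

theorem norm_contourDividedDiff_le {a G : ℝ} {j : ℕ} (hv : ∀ i ≤ j, ‖v i - c‖ ≤ a) (haR : a < R)
    (hg : ∀ z ∈ sphere c R, ‖g z‖ ≤ G) :
    ‖contourDividedDiff g c R v j‖ ≤ R * G / (R - a) ^ (j + 1) := by
  have hRa : 0 < R - a := sub_pos.2 haR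
  have hR : 0 ≤ R := (norm_nonneg _).trans ((hv 0 j.zero_le).trans haR.le)
  rw [mul_div_assoc]
  refine circleIntegral.norm_two_pi_i_inv_smul_integral_le_of_norm_le_const hR fun z hz => ?_
  have hdist : ∀ i ∈ range (j + 1), R - a ≤ ‖z - v i‖ := fun i hi => by
    have := hv i (Nat.lt_succ_iff.1 (mem_range.1 hi))
    have := norm_sub_norm_le (z - c) (v i - c)
    rw [mem_sphere_iff_norm.1 hz, sub_sub_sub_cancel_right] at this
    linarith
  have hprod : (R - a) ^ (j + 1) ≤ ‖∏ i ∈ range (j + 1), (z - v i)‖ := by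
    rw [norm_prod, pow_eq_prod_const]
    exact prod_le_prod (fun _ _ => hRa.le) hdist
  rw [norm_div]
  exact div_le_div₀ ((norm_nonneg _).trans (hg z hz)) (hg z hz) (pow_pos hRa _) hprod

end DividedDifference

noncomputable def expSum {ι : Type*} [Fintype ι] (c : ι → ℂ) (ω : ι → ℝ) (x : ℝ) : ℂ :=
  ∑ k, c k * cexp (I * ω k * x)

section ExpSum

variable {ι : Type*} [Fintype ι] (c : ι → ℂ) (ω : ι → ℝ)

theorem hasDerivAt_expSum (x : ℝ) :
    HasDerivAt (expSum c ω) (expSum (fun k => I * ω k * c k) ω x) x := by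
  unfold expSum
  refine HasDerivAt.fun_sum fun k _ => ?_
  have h : HasDerivAt (fun y : ℝ => I * ω k * (y : ℂ)) (I * ω k) x := by
    simpa using (hasDerivAt_id x).ofReal_comp.const_mul (I * ω k)
  exact (h.cexp.const_mul (c k)).congr_deriv (by ring)

theorem continuous_expSum : Continuous (expSum c ω) :=
  continuous_iff_continuousAt.2 fun x => (hasDerivAt_expSum c ω x).continuousAt

theorem iteratedDeriv_expSum (n : ℕ) :
    iteratedDeriv n (expSum c ω) = expSum (fun k => (I * ω k) ^ n * c k) ω := by
  induction n with
  | zero => simp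
  | succ n ih =>
    ext x
    rw [iteratedDeriv_succ, ih, (hasDerivAt_expSum _ ω x).deriv]
    simp only [expSum, pow_succ]
    exact sum_congr rfl fun k _ => by ring

theorem norm_iteratedDeriv_expSum_of_forall_eq {θ : ℝ} (hθ : ∀ k, ω k = θ) (n : ℕ) (x : ℝ) :
    ‖iteratedDeriv n (expSum c ω) x‖ = |θ| ^ n * ‖expSum c ω x‖ := by
  have : iteratedDeriv n (expSum c ω) x = (I * θ) ^ n * expSum c ω x := by
    simp only [iteratedDeriv_expSum, hθ, expSum, mul_sum, mul_assoc]
  rw [this, norm_mul, norm_pow, norm_mul, norm_I, one_mul, norm_real, Real.norm_eq_abs]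

theorem expSum_add (x δ : ℝ) :
    expSum c ω (x + δ) = expSum (fun k => cexp (I * ω k * δ) * c k) ω x := by
  simp only [expSum, ofReal_add, mul_add, exp_add]
  exact sum_congr rfl fun k _ => by ring

/-- Multiplying the coefficients by `e^{iωₖδ} - w` applies `f ↦ f(· + δ) - w • f` to
`expSum c ω`, so the left side is `∏ i < j` of these operators applied at `x`. -/
theorem norm_expSum_prod_sub_le (w : ℕ → ℂ) {δ F : ℝ} (j : ℕ) {x : ℝ}
    (hF : ∀ i ≤ j, ‖expSum c ω (x + i * δ)‖ ≤ F) :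
    ‖expSum (fun k => (∏ i ∈ range j, (cexp (I * ω k * δ) - w i)) * c k) ω x‖
      ≤ (∏ i ∈ range j, (1 + ‖w i‖)) * F := by
  induction j generalizing x with
  | zero => simpa using hF 0 le_rfl
  | succ j ih =>
    set E := fun y => expSum (fun k => (∏ i ∈ range j, (cexp (I * ω k * δ) - w i)) * c k) ω y
    have hstep : expSum (fun k => (∏ i ∈ range (j + 1), (cexp (I * ω k * δ) - w i)) * c k) ω x
        = E (x + δ) - w j * E x := by
      simp only [E]
      rw [expSum_add]
      simp only [expSum, mul_sum, ← sum_sub_distrib, prod_range_succ]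
      exact sum_congr rfl fun k _ => by ring
    have h₁ : ‖E (x + δ)‖ ≤ (∏ i ∈ range j, (1 + ‖w i‖)) * F := ih fun i hi => by
      convert hF (i + 1) (by omega) using 3
      push_cast
      ring
    have h₂ : ‖E x‖ ≤ (∏ i ∈ range j, (1 + ‖w i‖)) * F := ih fun i hi => hF i (by omega)
    rw [hstep]
    calc ‖E (x + δ) - w j * E x‖ ≤ ‖E (x + δ)‖ + ‖w j‖ * ‖E x‖ := by
          rw [← norm_mul]
          exact norm_sub_le _ _
      _ ≤ (∏ i ∈ range (j + 1), (1 + ‖w i‖)) * F := by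
          rw [prod_range_succ]
          nlinarith [mul_le_mul_of_nonneg_left h₂ (norm_nonneg (w j))]

end ExpSum

section LogSymbol

variable {δ : ℝ} (n : ℕ)

theorem differentiableOn_log_div_pow {R : ℝ} (hR : R < 1) :
    DifferentiableOn ℂ (fun z => (log z / δ) ^ n) (closedBall 1 R) := fun _ hz =>
  ((differentiableAt_log (ball_one_subset_slitPlane (closedBall_subset_ball hR hz))).div_const
    _ |>.pow n).differentiableWithinAt

theorem norm_log_div_pow_le {z : ℂ} (hz : ‖z - 1‖ ≤ 1 / 2) :
    ‖(log z / δ) ^ n‖ ≤ (3 / 2 * ‖z - 1‖ / |δ|) ^ n := by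
  have := norm_log_one_add_half_le_self hz
  rw [add_sub_cancel] at this
  rw [norm_pow, norm_div, norm_real, Real.norm_eq_abs]
  gcongr

theorem log_exp_I_mul_div_pow (hδ : δ ≠ 0) {θ : ℝ} (hθ : |θ * δ| < π) :
    (log (cexp (I * θ * δ)) / δ) ^ n = (I * θ) ^ n := by
  have him : (I * θ * δ).im = θ * δ := by simp
  have := abs_lt.1 hθ
  rw [log_exp (by rw [him]; linarith) (by rw [him]; linarith),
    mul_div_cancel_right₀ _ (ofReal_ne_zero.2 hδ)]

end LogSymbol

theorem norm_iteratedDeriv_expSum_le_sum {M n : ℕ} (c : Fin M → ℂ) (ω : Fin M → ℝ)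
    {Ω δ a R F x : ℝ} (hω : ∀ k, |ω k| ≤ Ω) (hδ : δ ≠ 0) (ha : Ω * |δ| ≤ a) (haR : a < R)
    (hR : R ≤ 1 / 2) (hF : ∀ i < M, ‖expSum c ω (x + i * δ)‖ ≤ F) :
    ‖iteratedDeriv n (expSum c ω) x‖
      ≤ ∑ j ∈ range M, R * (3 / 2 * R / |δ|) ^ n / (R - a) ^ (j + 1) * ((2 + a) ^ j * F) := by
  have hθ : ∀ k, |ω k * δ| ≤ a := fun k => by
    rw [abs_mul]
    exact (mul_le_mul_of_nonneg_right (hω k) (abs_nonneg δ)).trans ha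
  have hωδ : ∀ k, ‖cexp (I * ω k * δ) - 1‖ ≤ a := fun k => by
    have := Real.norm_exp_I_mul_ofReal_sub_one_le (x := ω k * δ)
    rw [ofReal_mul, ← mul_assoc, Real.norm_eq_abs] at this
    exact this.trans (hθ k)
  obtain ⟨v, hve⟩ : ∃ v : ℕ → ℂ, ∀ k : Fin M, v k = cexp (I * ω k * δ) :=
    ⟨fun i => if h : i < M then cexp (I * ω ⟨i, h⟩ * δ) else 1, fun k => dif_pos k.isLt⟩
  have hv : ∀ i < M, ‖v i - 1‖ ≤ a := fun i hi => by
    simpa only [hve ⟨i, hi⟩] using hωδ ⟨i, hi⟩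
  obtain ⟨d, hnode, hd⟩ : ∃ d : ℕ → ℂ,
      (∀ k : Fin M, (I * ω k) ^ n = ∑ j ∈ range M, (∏ i ∈ range j, (v k - v i)) * d j) ∧
      ∀ j ∈ range M, ‖d j‖ ≤ R * (3 / 2 * R / |δ|) ^ n / (R - a) ^ (j + 1) := by
    refine ⟨contourDividedDiff (fun z => (log z / δ) ^ n) 1 R v, fun k => ?_, fun j hj => ?_⟩
    · rw [← log_exp_I_mul_div_pow n hδ (by linarith [hθ k, Real.pi_gt_three]), ← hve k]
      refine eq_sum_prod_mul_contourDividedDiff (differentiableOn_log_div_pow n (by linarith))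
        (fun i hi => ?_) k.isLt
      rw [mem_ball, dist_eq_norm]
      exact (hv i hi).trans_lt haR
    · refine norm_contourDividedDiff_le (fun i hi => hv i (by simp at hj; omega)) haR
        fun z hz => ?_
      rw [mem_sphere_iff_norm] at hz
      simpa [hz] using norm_log_div_pow_le n (hz.le.trans hR)
  have hE : ∀ j ∈ range M,
      ‖expSum (fun k => (∏ i ∈ range j, (cexp (I * ω k * δ) - v i)) * c k) ω x‖
        ≤ (2 + a) ^ j * F := by
    intro j hj
    have hjM : j < M := mem_range.1 hj
    refine (norm_expSum_prod_sub_le c ω v j fun i hi => hF i (by omega)).trans ?_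
    have hF0 : 0 ≤ F := (norm_nonneg _).trans (hF 0 (by omega))
    refine mul_le_mul_of_nonneg_right ?_ hF0
    rw [pow_eq_prod_const]
    refine prod_le_prod (fun _ _ => by positivity) fun i hi => ?_
    have := norm_le_norm_sub_add (v i) 1
    linarith [hv i (by simp at hi; omega), norm_one (α := ℂ)]
  have hsplit : iteratedDeriv n (expSum c ω) x = ∑ j ∈ range M,
      d j * expSum (fun k => (∏ i ∈ range j, (cexp (I * ω k * δ) - v i)) * c k) ω x := by
    simp only [iteratedDeriv_expSum, expSum, hnode, hve, sum_mul, mul_sum]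
    rw [sum_comm]
    exact sum_congr rfl fun j _ => sum_congr rfl fun k _ => by ring
  rw [hsplit]
  refine (norm_sum_le _ _).trans (sum_le_sum fun j hj => ?_)
  rw [norm_mul]
  exact mul_le_mul (hd j hj) (hE j hj) (norm_nonneg _) ((norm_nonneg _).trans (hd j hj))

theorem exists_abs_eq_forall_add_mul_mem_Icc {x d : ℝ} {m : ℕ} (hx : x ∈ Set.Icc (0 : ℝ) 1)
    (hd : 0 ≤ d) (hmd : m * d ≤ 1 / 2) :
    ∃ δ, |δ| = d ∧ ∀ i ≤ m, x + i * δ ∈ Set.Icc (0 : ℝ) 1 := by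
  have hid : ∀ i ≤ m, 0 ≤ (i : ℝ) * d ∧ (i : ℝ) * d ≤ 1 / 2 := fun i hi =>
    ⟨by positivity, (mul_le_mul_of_nonneg_right (by exact_mod_cast hi) hd).trans hmd⟩
  rcases le_total x (1 / 2) with h | h
  · refine ⟨d, abs_of_nonneg hd, fun i hi => ⟨?_, ?_⟩⟩ <;> linarith [hid i hi, hx.1]
  · refine ⟨-d, by rw [abs_neg, abs_of_nonneg hd], fun i hi => ⟨?_, ?_⟩⟩ <;>
      linarith [hid i hi, hx.2]

theorem geom_sum_le_two_mul_pow {b : ℝ} (hb : 2 ≤ b) (m : ℕ) :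
    ∑ j ∈ range (m + 1), b ^ j ≤ 2 * b ^ m := by
  have hgeom := geom_sum_mul_of_one_le (by linarith : (1 : ℝ) ≤ b) (m + 1)
  refine le_of_mul_le_mul_right ?_ (by linarith : (0 : ℝ) < b - 1)
  rw [hgeom, pow_succ]
  nlinarith [pow_pos (by linarith : (0 : ℝ) < b) m]

theorem twelve_mul_add_three_le_two_pow {M : ℕ} (hM : 4 ≤ M) : 12 * M + 3 ≤ 2 ^ (M + 2) := by
  induction M, hM using Nat.le_induction with
  | base => norm_num
  | succ M _ ih => rw [pow_succ]; omega

theorem three_mul_le_two_pow (m : ℕ) : 3 * m ≤ 2 ^ (m + 1) := by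
  induction m with
  | zero => norm_num
  | succ m ih =>
    rcases Nat.eq_zero_or_pos m with rfl | hm
    · norm_num
    · rw [pow_succ]; omega

theorem sum_two_mul_pow_twelve_mul_add_three_le {M : ℕ} (hM : 2 ≤ M) :
    ∑ j ∈ range M, 2 * (12 * M + 3 : ℝ) ^ j ≤ 2 ^ (M * (M + 1)) := by
  rcases (show M = 2 ∨ M = 3 ∨ 4 ≤ M by omega) with rfl | rfl | hM4
  · norm_num [sum_range_succ]
  · norm_num [sum_range_succ]
  obtain ⟨m, rfl⟩ : ∃ m, M = m + 1 := ⟨M - 1, by omega⟩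
  have hb : (12 * (m + 1 : ℕ) + 3 : ℝ) ≤ 2 ^ (m + 3) := by
    exact_mod_cast twelve_mul_add_three_le_two_pow hM4
  calc ∑ j ∈ range (m + 1), 2 * (12 * (m + 1 : ℕ) + 3 : ℝ) ^ j
      = 2 * ∑ j ∈ range (m + 1), (12 * (m + 1 : ℕ) + 3 : ℝ) ^ j := by rw [mul_sum]
    _ ≤ 2 * (2 * (2 ^ (m + 3)) ^ m) := by
        gcongr
        exact (geom_sum_le_two_mul_pow (by push_cast; linarith) m).trans (by gcongr)
    _ = 2 ^ ((m + 1) * (m + 1 + 1)) := by rw [← pow_mul, ← pow_succ', ← pow_succ']; ring_nf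

theorem sum_two_mul_nine_pow_mul_le (m : ℕ) :
    (∑ j ∈ range (m + 1), 2 * (9 : ℝ) ^ j) * (3 * m / 2) ^ (m - 1)
      ≤ 2 ^ ((m + 1) * (m + 2)) := by
  have h3m : (3 * m / 2 : ℝ) ≤ 2 ^ m := by
    have : (3 * m : ℝ) ≤ 2 ^ (m + 1) := by exact_mod_cast three_mul_le_two_pow m
    rw [pow_succ] at this
    linarith
  have hexp : (m + 1) * (m + 2) = 2 + 4 * m + m * (m - 1) := by
    rcases m with _ | m
    · rfl
    · simp only [Nat.add_sub_cancel]; ring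
  calc (∑ j ∈ range (m + 1), 2 * (9 : ℝ) ^ j) * (3 * m / 2) ^ (m - 1)
      ≤ (2 * (2 * (2 ^ 4) ^ m)) * (2 ^ m) ^ (m - 1) := by
        rw [← mul_sum]
        gcongr
        exact (geom_sum_le_two_mul_pow (by norm_num) m).trans (by gcongr; norm_num)
    _ = 2 ^ ((m + 1) * (m + 2)) := by rw [hexp, pow_add, pow_add, ← pow_mul, ← pow_mul]; ring

theorem three_mul_pow_mul_pow_le {Ω q B : ℝ} {j n M : ℕ} (hΩ : 0 ≤ Ω) (hq : 0 ≤ q)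
    (hqB : 3 * Ω * q ≤ B * (1 + Ω)) (hjn : j ≤ n) (hM : 2 ≤ M) :
    (3 * Ω) ^ n * q ^ j ≤ B ^ j * (1 + Ω) ^ (M * n) := by
  obtain ⟨k, rfl⟩ := Nat.exists_eq_add_of_le hjn
  calc (3 * Ω) ^ (j + k) * q ^ j = (3 * Ω) ^ k * (3 * Ω * q) ^ j := by ring
    _ ≤ ((1 + Ω) ^ 2) ^ k * (B * (1 + Ω)) ^ j := by
        gcongr
        nlinarith [sq_nonneg (1 - Ω)]
    _ = B ^ j * (1 + Ω) ^ (2 * k + j) := by rw [pow_add, pow_mul, mul_pow]; ring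
    _ ≤ B ^ j * (1 + Ω) ^ (M * (j + k)) := by
        have hB : 0 ≤ B := nonneg_of_mul_nonneg_left ((by positivity : 0 ≤ 3 * Ω * q).trans hqB)
          (by linarith)
        gcongr
        · linarith
        · nlinarith

section Regimes

variable {M n : ℕ} (c : Fin M → ℂ) (ω : Fin M → ℝ) {Ω F x : ℝ}

theorem norm_iteratedDeriv_expSum_le_of_pred_le (hω : ∀ k, |ω k| ≤ Ω) (hΩ : 0 < Ω)
    (hM : 2 ≤ M) (hn : M - 1 ≤ n) (hx : x ∈ Set.Icc (0 : ℝ) 1)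
    (hF : ∀ y ∈ Set.Icc (0 : ℝ) 1, ‖expSum c ω y‖ ≤ F) :
    ‖iteratedDeriv n (expSum c ω) x‖ ≤ 2 ^ (M * (M + 1)) * (1 + Ω) ^ (M * n) * F := by
  -- With `R = 2Ω|δ|` the Cauchy bound on `(log z / δ)ⁿ` is `(3Ω)ⁿ`, free of `δ`, and the
  -- factor `(Ω|δ|)⁻ʲ` coming from `(R - a)⁻ʲ` is absorbed by `(3Ω)ⁿ` because `j < M ≤ n + 1`.
  set d : ℝ := (2 * M * (1 + Ω))⁻¹ with hd_def
  have hM' : (2 : ℝ) ≤ M := by exact_mod_cast hM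
  have hd : 0 < d := by positivity
  have hΩd : Ω * d ≤ 1 / 4 := by
    rw [hd_def, ← div_eq_mul_inv, div_le_iff₀ (by positivity)]
    nlinarith
  obtain ⟨δ, hδ, hshift⟩ := exists_abs_eq_forall_add_mul_mem_Icc (m := M - 1) hx hd.le (by
    rw [hd_def, ← div_eq_mul_inv, div_le_iff₀ (by positivity), Nat.cast_sub (by omega)]
    nlinarith)
  have hcore := norm_iteratedDeriv_expSum_le_sum c ω (n := n) (a := Ω * d) (R := 2 * (Ω * d)) hω
    (by rw [← abs_pos, hδ]; exact hd) (by rw [hδ]) (by nlinarith [mul_pos hΩ hd]) (by linarith)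
    fun i hi => hF _ (hshift i (by omega))
  rw [hδ] at hcore
  refine hcore.trans ?_
  have hF0 : 0 ≤ F := (norm_nonneg _).trans (hF x hx)
  calc ∑ j ∈ range M, 2 * (Ω * d) * (3 / 2 * (2 * (Ω * d)) / d) ^ n
        / (2 * (Ω * d) - Ω * d) ^ (j + 1) * ((2 + Ω * d) ^ j * F)
      = ∑ j ∈ range M, 2 * ((3 * Ω) ^ n * ((2 + Ω * d) / (Ω * d)) ^ j) * F := by
        have hΩd0 : Ω * d ≠ 0 := (mul_pos hΩ hd).ne'
        have h3 : 3 / 2 * (2 * (Ω * d)) / d = 3 * Ω := by field_simp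
        refine sum_congr rfl fun j _ => ?_
        rw [h3, show 2 * (Ω * d) - Ω * d = Ω * d by ring, div_pow, pow_succ]
        field_simp
    _ ≤ ∑ j ∈ range M, 2 * ((12 * M + 3) ^ j * (1 + Ω) ^ (M * n)) * F := by
        refine sum_le_sum fun j hj => ?_
        refine mul_le_mul_of_nonneg_right (mul_le_mul_of_nonneg_left ?_ two_pos.le) hF0
        refine three_mul_pow_mul_pow_le hΩ.le (by positivity) ?_ (by simp at hj; omega) hM
        rw [← mul_div_assoc, div_le_iff₀ (by positivity), hd_def]
        field_simp
        nlinarith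
    _ = (∑ j ∈ range M, 2 * (12 * M + 3 : ℝ) ^ j) * (1 + Ω) ^ (M * n) * F := by
        rw [sum_mul, sum_mul]
        exact sum_congr rfl fun j _ => by ring
    _ ≤ 2 ^ (M * (M + 1)) * (1 + Ω) ^ (M * n) * F := by
        gcongr
        exact sum_two_mul_pow_twelve_mul_add_three_le hM

theorem norm_iteratedDeriv_expSum_le_of_lt_pred (hω : ∀ k, |ω k| ≤ Ω) (hΩ : 0 ≤ Ω)
    (hn : 1 ≤ n) (hnM : n < M - 1) (hx : x ∈ Set.Icc (0 : ℝ) 1)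
    (hF : ∀ y ∈ Set.Icc (0 : ℝ) 1, ‖expSum c ω y‖ ≤ F) :
    ‖iteratedDeriv n (expSum c ω) x‖ ≤ 2 ^ (M * (M + 1)) * (1 + Ω) ^ (M * (M - 1)) * F := by
  obtain ⟨m, rfl⟩ : ∃ m, M = m + 1 := ⟨M - 1, by omega⟩
  rw [Nat.add_sub_cancel] at hnM ⊢
  have hm : (2 : ℝ) ≤ m := by exact_mod_cast (by omega : 2 ≤ m)
  set d : ℝ := (2 * m * (1 + Ω))⁻¹ with hd_def
  have hd : 0 < d := by positivity
  obtain ⟨δ, hδ, hshift⟩ := exists_abs_eq_forall_add_mul_mem_Icc (m := m) hx hd.le (by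
    rw [hd_def, ← div_eq_mul_inv, div_le_iff₀ (by positivity)]
    nlinarith)
  have hcore := norm_iteratedDeriv_expSum_le_sum c ω (n := n) (a := 1 / 4) (R := 1 / 2) hω
    (by rw [← abs_pos, hδ]; exact hd)
    (by rw [hδ, hd_def, ← div_eq_mul_inv, div_le_iff₀ (by positivity)]; nlinarith)
    (by norm_num) le_rfl fun i hi => hF _ (hshift i (by omega))
  rw [hδ] at hcore
  refine hcore.trans ?_
  have hF0 : 0 ≤ F := (norm_nonneg _).trans (hF x hx)
  have hG : 3 / 2 * (1 / 2) / d = 3 * m / 2 * (1 + Ω) := by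
    rw [hd_def]
    field_simp
  calc ∑ j ∈ range (m + 1), 1 / 2 * (3 / 2 * (1 / 2) / d) ^ n / (1 / 2 - 1 / 4) ^ (j + 1)
        * ((2 + 1 / 4) ^ j * F)
      = ∑ j ∈ range (m + 1), 2 * 9 ^ j * ((3 * m / 2) ^ n * (1 + Ω) ^ n) * F := by
        refine sum_congr rfl fun j _ => ?_
        rw [hG, mul_pow, pow_succ]
        norm_num [div_pow]
        field_simp
        ring
    _ ≤ ∑ j ∈ range (m + 1), 2 * 9 ^ j * ((3 * m / 2) ^ (m - 1) * (1 + Ω) ^ ((m + 1) * m)) * F := by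
        gcongr
        · linarith
        · omega
        · linarith
        · nlinarith
    _ = (∑ j ∈ range (m + 1), 2 * (9 : ℝ) ^ j) * (3 * m / 2) ^ (m - 1)
          * (1 + Ω) ^ ((m + 1) * m) * F := by
        rw [sum_mul, sum_mul, sum_mul]
        exact sum_congr rfl fun j _ => by ring
    _ ≤ 2 ^ ((m + 1) * (m + 1 + 1)) * (1 + Ω) ^ ((m + 1) * m) * F := by
        gcongr
        exact sum_two_mul_nine_pow_mul_le m

end Regimes

theorem bernstein_type_derivative_bound
    (M : ℕ) (Ω : ℝ) (c : Fin M → ℂ) (ω : Fin M → ℝ)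
    (hω : ∀ k, |ω k| ≤ Ω)
    (f : ℝ → ℂ)
    (hf : ∀ x : ℝ, f x = ∑ k, c k * Complex.exp (Complex.I * (ω k : ℂ) * (x : ℂ)))
    (n : ℕ) (hn : 1 ≤ n) :
    ∀ x ∈ Set.Icc (0 : ℝ) 1,
      ‖iteratedDeriv n f x‖
        ≤ 2 ^ (M * (M + 1)) * (1 + Ω) ^ (M * max n (M - 1)) *
            sSup ((fun y => ‖f y‖) '' Set.Icc (0 : ℝ) 1) := by
  intro x hx
  obtain rfl : f = expSum c ω := funext hf
  have hF : ∀ y ∈ Set.Icc (0 : ℝ) 1,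
      ‖expSum c ω y‖ ≤ sSup ((fun y => ‖expSum c ω y‖) '' Set.Icc (0 : ℝ) 1) := fun y hy =>
    le_csSup (isCompact_Icc.bddAbove_image (continuous_expSum c ω).norm.continuousOn)
      ⟨y, hy, rfl⟩
  have hF0 := (norm_nonneg _).trans (hF x hx)
  by_cases hzero : ∀ k, ω k = 0
  · rw [norm_iteratedDeriv_expSum_of_forall_eq c ω hzero, abs_zero, zero_pow (by omega), zero_mul]
    rcases M.eq_zero_or_pos with rfl | hM
    · simpa using hF0
    · have := (abs_nonneg _).trans (hω ⟨0, hM⟩)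
      positivity
  push Not at hzero
  obtain ⟨k₀, hk₀⟩ := hzero
  have hΩ : 0 < Ω := (abs_pos.2 hk₀).trans_le (hω k₀)
  rcases Nat.lt_or_ge M 2 with hM | hM
  · obtain rfl : M = 1 := by have := k₀.pos; omega
    rw [norm_iteratedDeriv_expSum_of_forall_eq c ω (fun k => congrArg ω (Subsingleton.elim k k₀))]
    simp only [Nat.sub_self, max_eq_left (Nat.zero_le n), one_mul]
    have hθ : |ω k₀| ^ n ≤ 2 ^ (1 + 1) * (1 + Ω) ^ n :=
      calc |ω k₀| ^ n ≤ (1 + Ω) ^ n := by gcongr; linarith [hω k₀]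
        _ ≤ 2 ^ (1 + 1) * (1 + Ω) ^ n := le_mul_of_one_le_left (by positivity) (by norm_num)
    exact mul_le_mul hθ (hF x hx) (norm_nonneg _) (by positivity)
  rcases le_or_gt (M - 1) n with hMn | hnM
  · rw [max_eq_left hMn]
    exact norm_iteratedDeriv_expSum_le_of_pred_le c ω hω hΩ hM hMn hx hF
  · rw [max_eq_right hnM.le]
    exact norm_iteratedDeriv_expSum_le_of_lt_pred c ω hω hΩ.le hn hnM hx hF
end

section
/- Let f : [0,1] → ℂ be C¹ with max_{x∈[0,1]} |f'(x)| ≤ c·max_{x∈[0,1]} |f(x)| for some c ≥ 1. Then (∫₀¹ |f(x)|² dx)^{1/2} ≥ (1/√(3c))·max_{x∈[0,1]} |f(x)|. -/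
/-!
Let `M = ‖f x₀‖` be the maximum of `‖f‖` on `[0, 1]`. Since `f` is `c M`-Lipschitz there, the
mean value inequality gives `‖f x‖ ≥ M (1 - c |x - x₀|)`, i.e. `‖f‖` dominates `M` times the
tent of slope `c` centred at `x₀`. A window of length `1 / c` around `x₀` fits in `[0, 1]`, and
over any such window the squared tent integrates to at least `1 / (3c)` (as `p³ + q³ ≤ (p + q)³`
for `p, q ≥ 0`), so `∫₀¹ ‖f‖² ≥ M² / (3c)`.
-/

open Real

def tent (c x₀ x : ℝ) : ℝ := max 0 (1 - c * |x - x₀|)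

lemma continuous_tent (c x₀ : ℝ) : Continuous (tent c x₀) := by
  unfold tent; fun_prop

lemma tent_sub (c x₀ x : ℝ) : tent c x₀ x = tent c 0 (x - x₀) := by
  simp [tent]

lemma tent_zero_neg (c t : ℝ) : tent c 0 (-t) = tent c 0 t := by
  simp [tent]

lemma integral_one_sub_mul_sq {c : ℝ} (hc : c ≠ 0) (u : ℝ) :
    ∫ t in (0 : ℝ)..u, (1 - c * t) ^ 2 = (1 - (1 - c * u) ^ 3) / (3 * c) := by
  rw [intervalIntegral.integral_comp_sub_mul (fun t => t ^ 2) hc, integral_pow, smul_eq_mul]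
  field_simp
  ring

lemma integral_tent_sq_zero_of_nonneg {c u : ℝ} (hc : 0 < c) (hu : 0 ≤ u) (hcu : c * u ≤ 1) :
    ∫ t in (0 : ℝ)..u, tent c 0 t ^ 2 = (1 - (1 - c * u) ^ 3) / (3 * c) := by
  rw [← integral_one_sub_mul_sq hc.ne']
  refine intervalIntegral.integral_congr fun t ht => ?_
  rw [Set.uIcc_of_le hu] at ht
  have : c * t ≤ 1 := by nlinarith [ht.2]
  simp only [tent, sub_zero, abs_of_nonneg ht.1]
  rw [max_eq_right (by linarith)]

lemma integral_tent_sq_of_le {c x₀ u v : ℝ} (hc : 0 < c) (hu : 0 ≤ u) (hv : 0 ≤ v)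
    (hcu : c * u ≤ 1) (hcv : c * v ≤ 1) :
    ∫ x in x₀ - u..x₀ + v, tent c x₀ x ^ 2
      = (2 - (1 - c * u) ^ 3 - (1 - c * v) ^ 3) / (3 * c) := by
  have hint : ∀ a b : ℝ, IntervalIntegrable (fun t => tent c 0 t ^ 2) MeasureTheory.volume a b :=
    fun a b => ((continuous_tent c 0).pow 2).intervalIntegrable a b
  have hleft : ∫ t in -u..0, tent c 0 t ^ 2 = ∫ t in (0 : ℝ)..u, tent c 0 t ^ 2 := by
    simpa [tent_zero_neg] using
      (intervalIntegral.integral_comp_neg (a := 0) (b := u) fun t => tent c 0 t ^ 2).symm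
  simp_rw [tent_sub c x₀]
  rw [intervalIntegral.integral_comp_sub_right (fun t => tent c 0 t ^ 2), sub_sub_cancel_left,
    add_sub_cancel_left, ← intervalIntegral.integral_add_adjacent_intervals (hint _ 0) (hint 0 _),
    hleft, integral_tent_sq_zero_of_nonneg hc hu hcu, integral_tent_sq_zero_of_nonneg hc hv hcv]
  ring

lemma one_div_three_mul_le_integral_tent_sq {c a b x₀ : ℝ} (hx₀ : x₀ ∈ Set.Icc a b)
    (hcab : 1 ≤ c * (b - a)) :
    1 / (3 * c) ≤ ∫ x in a..b, tent c x₀ x ^ 2 := by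
  have hc : 0 < c := by nlinarith [hx₀.1, hx₀.2]
  set u := min (x₀ - a) c⁻¹
  set v := min (b - x₀) c⁻¹
  have hu : 0 ≤ u := le_min (by linarith [hx₀.1]) (by positivity)
  have hv : 0 ≤ v := le_min (by linarith [hx₀.2]) (by positivity)
  have hcu : c * u ≤ 1 := by
    calc c * u ≤ c * c⁻¹ := by gcongr; exact min_le_right _ _
      _ = 1 := mul_inv_cancel₀ hc.ne'
  have hcv : c * v ≤ 1 := by
    calc c * v ≤ c * c⁻¹ := by gcongr; exact min_le_right _ _
      _ = 1 := mul_inv_cancel₀ hc.ne'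
  have hcuv : 1 ≤ c * u + c * v := by
    have : c * c⁻¹ = 1 := mul_inv_cancel₀ hc.ne'
    rcases min_choice (x₀ - a) c⁻¹ with hu' | hu' <;>
    rcases min_choice (b - x₀) c⁻¹ with hv' | hv' <;>
    · simp only [u, v, hu', hv']; nlinarith
  have hsub : ∫ x in x₀ - u..x₀ + v, tent c x₀ x ^ 2 ≤ ∫ x in a..b, tent c x₀ x ^ 2 :=
    intervalIntegral.integral_mono_interval (by linarith [min_le_left (x₀ - a) c⁻¹])
      (by linarith) (by linarith [min_le_left (b - x₀) c⁻¹])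
      (Filter.Eventually.of_forall fun x => sq_nonneg _)
      (((continuous_tent c x₀).pow 2).intervalIntegrable a b)
  calc 1 / (3 * c) ≤ (2 - (1 - c * u) ^ 3 - (1 - c * v) ^ 3) / (3 * c) := by
        have hp := sub_nonneg.2 hcu
        have hq := sub_nonneg.2 hcv
        have hcube : (1 - c * u) ^ 3 + (1 - c * v) ^ 3 ≤ ((1 - c * u) + (1 - c * v)) ^ 3 := by
          nlinarith [mul_nonneg (mul_nonneg hp hq) (add_nonneg hp hq)]
        have hsum : ((1 - c * u) + (1 - c * v)) ^ 3 ≤ 1 :=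
          pow_le_one₀ (add_nonneg hp hq) (by linarith)
        gcongr
        linarith
    _ = ∫ x in x₀ - u..x₀ + v, tent c x₀ x ^ 2 := (integral_tent_sq_of_le hc hu hv hcu hcv).symm
    _ ≤ ∫ x in a..b, tent c x₀ x ^ 2 := hsub

lemma Convex.norm_mul_tent_le_norm_image {E : Type*} [NormedAddCommGroup E] [NormedSpace ℝ E]
    {f f' : ℝ → E} {s : Set ℝ} {c x₀ x : ℝ} (hs : Convex ℝ s)
    (hf : ∀ y ∈ s, HasDerivWithinAt f (f' y) s y) (hbound : ∀ y ∈ s, ‖f' y‖ ≤ c * ‖f x₀‖)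
    (hx₀ : x₀ ∈ s) (hx : x ∈ s) :
    ‖f x₀‖ * tent c x₀ x ≤ ‖f x‖ := by
  have hlip : ‖f x - f x₀‖ ≤ c * ‖f x₀‖ * |x - x₀| :=
    hs.norm_image_sub_le_of_norm_hasDerivWithin_le hf hbound hx₀ hx
  have htri : ‖f x₀‖ ≤ ‖f x‖ + ‖f x - f x₀‖ := norm_le_norm_add_norm_sub _ _
  rw [tent, mul_max_of_nonneg _ _ (norm_nonneg _)]
  exact max_le (by simp) (by linarith)

theorem l2_lower_bound_from_derivative_control
    (f f' : ℝ → ℂ) (c : ℝ) (hc : 1 ≤ c)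
    (hderiv : ∀ x ∈ Set.Icc (0 : ℝ) 1, HasDerivAt f (f' x) x)
    (hbound : ∀ x ∈ Set.Icc (0 : ℝ) 1,
      ‖f' x‖ ≤ c * sSup ((fun y => ‖f y‖) '' Set.Icc (0 : ℝ) 1)) :
    Real.sqrt (∫ x in (0 : ℝ)..1, ‖f x‖ ^ 2)
      ≥ (1 / Real.sqrt (3 * c)) *
          sSup ((fun y => ‖f y‖) '' Set.Icc (0 : ℝ) 1) := by
  have hcont : ContinuousOn f (Set.Icc 0 1) := fun x hx =>
    (hderiv x hx).continuousAt.continuousWithinAt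
  obtain ⟨x₀, hx₀, hM⟩ :=
    isCompact_Icc.exists_sSup_image_eq (Set.nonempty_Icc.2 zero_le_one) hcont.norm
  rw [hM] at hbound ⊢
  have hpointwise : ∀ x ∈ Set.Icc (0 : ℝ) 1, (‖f x₀‖ * tent c x₀ x) ^ 2 ≤ ‖f x‖ ^ 2 :=
    fun x hx => pow_le_pow_left₀ (by unfold tent; positivity)
      ((convex_Icc 0 1).norm_mul_tent_le_norm_image
        (fun y hy => (hderiv y hy).hasDerivWithinAt) hbound hx₀ hx) 2
  have hL2 : ‖f x₀‖ ^ 2 / (3 * c) ≤ ∫ x in (0 : ℝ)..1, ‖f x‖ ^ 2 :=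
    calc ‖f x₀‖ ^ 2 / (3 * c) = ‖f x₀‖ ^ 2 * (1 / (3 * c)) := by ring
      _ ≤ ‖f x₀‖ ^ 2 * ∫ x in (0 : ℝ)..1, tent c x₀ x ^ 2 := by
        gcongr
        exact one_div_three_mul_le_integral_tent_sq hx₀ (by simpa using hc)
      _ = ∫ x in (0 : ℝ)..1, (‖f x₀‖ * tent c x₀ x) ^ 2 := by
        simp only [mul_pow, intervalIntegral.integral_const_mul]
      _ ≤ ∫ x in (0 : ℝ)..1, ‖f x‖ ^ 2 :=
        intervalIntegral.integral_mono_on zero_le_one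
          (((continuous_tent c x₀).const_mul _).pow 2 |>.intervalIntegrable 0 1)
          ((hcont.norm.pow 2).intervalIntegrable_of_Icc zero_le_one) hpointwise
  calc 1 / √(3 * c) * ‖f x₀‖ = √(‖f x₀‖ ^ 2 / (3 * c)) := by
        rw [Real.sqrt_div (sq_nonneg _), Real.sqrt_sq (norm_nonneg _)]
        ring
    _ ≤ √(∫ x in (0 : ℝ)..1, ‖f x‖ ^ 2) := Real.sqrt_le_sqrt hL2
end

section
/- Van der Waerden transfer of polynomial constraints: let R̃ be a polynomial in m̃+1 variables and p a positive integer, and set m = N_vdW(m̃+1, p) − 1 where N_vdW is the van der Waerden number. Suppose g : [0,1] → ℝ is such that for every x ∈ [0,1] the value g(x) is given by one of p 'branch' functions g̃₁,…,g̃_p, each of which satisfies R̃(g̃ⱼ(ã), g̃ⱼ(ã+h̃), …, g̃ⱼ(ã+m̃h̃)) = 0 for every arithmetic progression ã, ã+h̃, …, ã+m̃h̃ in [0,1]. Then the polynomial R(z₀,…,z_m) = ∏_{s} R̃(z_{s₀},…,z_{s_{m̃}}), product over all length-(m̃+1) arithmetic progressions s = (s₀,…,s_{m̃}) in {0,…,m},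 is a nonzero polynomial and satisfies R(g(a), g(a+h), …, g(a+mh)) = 0 for all a, b ∈ [0,1] with h = (b−a)/m. -/
/-!
Colour each grid point `a + k h`, `k ≤ m`, by a branch `g̃ⱼ` that realizes `g` there. By the van der
Waerden property some progression `s` of length `m̃ + 1` in `{0, …, m}` is monochromatic, of colour
`j`. Along `s` the function `g` coincides with `g̃ⱼ`, and `a + s h` is itself an arithmetic progression
in `[0, 1]`, so the factor `R̃ ∘ s` of `R` vanishes. Each factor is a renaming of `R̃` along an
injective map, hence nonzero, and so is their product.
-/

open MvPolynomial

def IsArithProgMap {n m : ℕ} (s : Fin n → Fin m) : Prop :=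
  ∃ a d : ℕ, 0 < d ∧ ∀ i, (s i : ℕ) = a + i * d

namespace IsArithProgMap

variable {n m : ℕ} {s : Fin n → Fin m}

theorem injective (hs : IsArithProgMap s) : Function.Injective s := by
  obtain ⟨a, d, hd, hs⟩ := hs
  intro i j hij
  have : (i : ℕ) * d = j * d := by simpa [hs] using congrArg Fin.val hij
  exact Fin.ext (Nat.eq_of_mul_eq_mul_right hd this)

theorem exists_affine_comp {R : Type*} [Semiring R] (hs : IsArithProgMap s) (a h : R) :
    ∃ a₀ h₀ : R, ∀ i, a + (s i : ℕ) * h = a₀ + (i : ℕ) * h₀ := by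
  obtain ⟨a', d, -, hs⟩ := hs
  refine ⟨a + a' * h, d * h, fun i => ?_⟩
  rw [hs]
  push_cast
  noncomm_ring

end IsArithProgMap

section ProgressionProduct

variable {R : Type*} [CommRing R] {n : ℕ}

open Classical in
noncomputable def progressionProduct (m : ℕ) (P : MvPolynomial (Fin n) R) :
    MvPolynomial (Fin m) R :=
  ∏ s ∈ Finset.univ.filter (IsArithProgMap (n := n) (m := m)), rename s P

theorem progressionProduct_ne_zero [IsDomain R] (m : ℕ) {P : MvPolynomial (Fin n) R}
    (hP : P ≠ 0) : progressionProduct m P ≠ 0 := by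
  classical
  refine Finset.prod_ne_zero_iff.mpr fun s hs => ?_
  have hinj := (Finset.mem_filter.mp hs).2.injective
  exact (map_ne_zero_iff _ (rename_injective s hinj)).mpr hP

theorem eval_progressionProduct_eq_zero {m : ℕ} {P : MvPolynomial (Fin n) R}
    {x : Fin m → R} {s : Fin n → Fin m} (hs : IsArithProgMap s) (hx : eval (x ∘ s) P = 0) :
    eval x (progressionProduct m P) = 0 := by
  classical
  rw [progressionProduct, map_prod]
  exact Finset.prod_eq_zero (Finset.mem_filter.mpr ⟨Finset.mem_univ s, hs⟩)
    (by rwa [eval_rename])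

end ProgressionProduct

theorem exists_arithProgMap_forall_eq {p mt m : ℕ}
    (hvdW : ∀ col : ℕ → Fin p, ∃ a d : ℕ, 0 < d ∧ a + mt * d ≤ m ∧
      ∀ i ≤ mt, ∀ j ≤ mt, col (a + i * d) = col (a + j * d))
    (c : Fin (m + 1) → Fin p) :
    ∃ s : Fin (mt + 1) → Fin (m + 1), IsArithProgMap s ∧ ∃ j, ∀ i, c (s i) = j := by
  obtain ⟨a, d, hd, hle, hmono⟩ := hvdW fun k => c ⟨min k m, by omega⟩
  have hlt (i : Fin (mt + 1)) : a + (i : ℕ) * d < m + 1 := by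
    have := Nat.mul_le_mul_right d (Nat.lt_succ_iff.mp i.isLt)
    omega
  refine ⟨fun i => ⟨a + i * d, hlt i⟩, ⟨a, d, hd, fun _ => rfl⟩, c ⟨min a m, by omega⟩, fun i => ?_⟩
  have := hmono i (Nat.lt_succ_iff.mp i.isLt) 0 (Nat.zero_le _)
  simp only [zero_mul, add_zero] at this
  convert this using 3
  have := hlt i
  omega

theorem Convex.add_mul_div_sub_mem {s : Set ℝ} (hs : Convex ℝ s) {a b : ℝ} (ha : a ∈ s)
    (hb : b ∈ s) {k m : ℕ} (hk : k ≤ m) : a + k * ((b - a) / m) ∈ s := by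
  have ht : (k / m : ℝ) ∈ Set.Icc 0 1 :=
    ⟨by positivity, div_le_one_of_le₀ (by exact_mod_cast hk) m.cast_nonneg⟩
  convert hs.add_smul_sub_mem ha hb ht using 1
  rw [smul_eq_mul]
  ring

/-- Van der Waerden transfer of polynomial constraints: `m` is assumed to have the
van der Waerden property that every `p`-coloring of `{0,…,m}` contains a monochromatic
arithmetic progression of length `m̃ + 1` (this holds for `m = N_vdW(m̃+1, p) − 1`). -/
theorem vdW_transfer_polynomial_constraint
    (mt p m : ℕ)
    (hvdW : ∀ col : ℕ → Fin p, ∃ a d : ℕ, 0 < d ∧ a + mt * d ≤ m ∧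
      ∀ i ≤ mt, ∀ j ≤ mt, col (a + i * d) = col (a + j * d))
    (Rt : MvPolynomial (Fin (mt + 1)) ℝ) (hRt : Rt ≠ 0)
    (g : ℝ → ℝ) (gt : Fin p → ℝ → ℝ)
    (hbranch : ∀ x ∈ Set.Icc (0 : ℝ) 1, ∃ j : Fin p, g x = gt j x)
    (hconstraint : ∀ j : Fin p, ∀ at_ ht_ : ℝ,
      (∀ i : ℕ, i ≤ mt → at_ + i * ht_ ∈ Set.Icc (0 : ℝ) 1) →
      MvPolynomial.eval (fun i : Fin (mt + 1) => gt j (at_ + (i : ℕ) * ht_)) Rt = 0) :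
    ∃ R : MvPolynomial (Fin (m + 1)) ℝ, R ≠ 0 ∧
      ∀ a ∈ Set.Icc (0 : ℝ) 1, ∀ b ∈ Set.Icc (0 : ℝ) 1,
        MvPolynomial.eval (fun k : Fin (m + 1) => g (a + (k : ℕ) * ((b - a) / m))) R = 0 := by
  refine ⟨progressionProduct (m + 1) Rt, progressionProduct_ne_zero _ hRt, fun a ha b hb => ?_⟩
  have hgrid (k : Fin (m + 1)) : a + (k : ℕ) * ((b - a) / m) ∈ Set.Icc (0 : ℝ) 1 :=
    (convex_Icc 0 1).add_mul_div_sub_mem ha hb (Nat.lt_succ_iff.mp k.isLt)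
  choose c hc using fun k => hbranch _ (hgrid k)
  obtain ⟨s, hs, j, hj⟩ := exists_arithProgMap_forall_eq hvdW c
  obtain ⟨a₀, h₀, hs_affine⟩ := hs.exists_affine_comp a ((b - a) / m)
  refine eval_progressionProduct_eq_zero hs ?_
  have hsub : ∀ i ≤ mt, a₀ + i * h₀ ∈ Set.Icc (0 : ℝ) 1 := fun i hi => by
    simpa [hs_affine ⟨i, Nat.lt_succ_of_le hi⟩] using hgrid (s ⟨i, Nat.lt_succ_of_le hi⟩)
  have hbranch_s : (fun k : Fin (m + 1) => g (a + (k : ℕ) * ((b - a) / m))) ∘ s =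
      fun i : Fin (mt + 1) => gt j (a₀ + (i : ℕ) * h₀) := by
    funext i
    rw [Function.comp_apply, hc, hj, hs_affine]
  rw [hbranch_s]
  exact hconstraint j a₀ h₀ hsub
end

section
/- Let σ : [−1,1] → ℝ be real analytic with σ(0) ≠ 0, and suppose σ is not a polynomial. Then for any finite set of distinct points 0 ≤ x₁ < x₂ < … < x_N ≤ 1 there exists b ∈ [−1,1] such that the values σ(b·x₁), …, σ(b·x_N) are linearly independent over ℚ. -/
/-!
If every `σ(b x₁), …, σ(b x_N)` were `ℚ`-dependent, then, as there are only countably many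
rational coefficient vectors `q`, a single `q ≠ 0` would give `∑ qₖ σ(b xₖ) = 0` for uncountably
many `b ∈ [-1, 1]`, hence for all of them by the isolated zeros principle. Expanding at `b = 0`
gives `cₙ ∑ qₖ xₖⁿ = 0` for the Taylor coefficients `cₙ` of `σ`, infinitely many of which are
nonzero because `σ` is not a polynomial. Dividing by `xⱼⁿ` for the largest `xⱼ` with `qⱼ ≠ 0` and
letting `n → ∞` along those coefficients forces `qⱼ = 0`; if that `xⱼ` is `0`, the moment `n = 0`,
available since `c₀ = σ 0 ≠ 0`, does it instead.
-/

open Filter Topology Set Function Polynomial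

section PowerSeries

variable {𝕜 : Type*} [NontriviallyNormedField 𝕜]

theorem eq_zero_of_eventually_hasSum_pow_smul_zero {a : ℕ → 𝕜}
    (h : ∀ᶠ z in 𝓝 (0 : 𝕜), HasSum (fun n => z ^ n • a n) 0) : a = 0 := by
  have hp : HasFPowerSeriesAt (0 : 𝕜 → 𝕜) (FormalMultilinearSeries.ofScalars 𝕜 a) 0 := by
    rw [hasFPowerSeriesAt_iff]
    simpa only [FormalMultilinearSeries.coeff_ofScalars, zero_add, Pi.zero_apply] using h
  exact (FormalMultilinearSeries.ofScalars_series_eq_zero (E := 𝕜)).mp hp.eq_zero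

theorem HasFPowerSeriesAt.eventuallyEq_eval_of_coeff_eq_zero {f : 𝕜 → 𝕜}
    {p : FormalMultilinearSeries 𝕜 𝕜 𝕜} (hp : HasFPowerSeriesAt f p 0) {M : ℕ}
    (hM : ∀ n, M ≤ n → p.coeff n = 0) :
    f =ᶠ[𝓝 0] fun z => (∑ n ∈ Finset.range M, C (p.coeff n) * X ^ n).eval z := by
  filter_upwards [hasFPowerSeriesAt_iff.mp hp] with z hz
  have hfin : HasSum (fun n => z ^ n • p.coeff n) (∑ n ∈ Finset.range M, z ^ n • p.coeff n) :=
    hasSum_sum_of_ne_finset_zero fun n hn => by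
      simp [hM n (by simpa using hn)]
  rw [zero_add] at hz
  simp only [hz.unique hfin, eval_finsetSum, eval_mul, eval_C, eval_pow, eval_X, smul_eq_mul,
    mul_comm]

theorem AnalyticOnNhd.infinite_setOf_coeff_ne_zero {f : 𝕜 → 𝕜} {U : Set 𝕜}
    (hf : AnalyticOnNhd 𝕜 f U) (hU : IsPreconnected U) (h₀ : 0 ∈ U)
    {p : FormalMultilinearSeries 𝕜 𝕜 𝕜} (hp : HasFPowerSeriesAt f p 0)
    (hpoly : ¬ ∃ P : 𝕜[X], ∀ z ∈ U, f z = P.eval z) :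
    {n | p.coeff n ≠ 0}.Infinite := by
  intro hfin
  obtain ⟨M, hM⟩ := hfin.bddAbove
  refine hpoly ⟨_, hf.eqOn_of_preconnected_of_eventuallyEq
    ((AnalyticOnNhd.eval_polynomial _).mono (subset_univ U)) hU h₀
    (hp.eventuallyEq_eval_of_coeff_eq_zero (M := M + 1) fun n hn => ?_)⟩
  by_contra hn
  exact absurd (hM hn) (by omega)

end PowerSeries

theorem AnalyticOnNhd.finite_setOf_eq_zero {𝕜 E : Type*} [NontriviallyNormedField 𝕜]
    [NormedAddCommGroup E] [NormedSpace 𝕜 E] {f : 𝕜 → E} {K : Set 𝕜}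
    (hf : AnalyticOnNhd 𝕜 f K) (hK : IsCompact K) (hK' : IsPreconnected K)
    (hne : ¬ EqOn f 0 K) : {z ∈ K | f z = 0}.Finite := by
  have := (hf.eqOn_zero_or_eventually_ne_zero_of_preconnected hK').resolve_left hne
  have hfin := hK.finite_sdiff_of_mem_codiscreteWithin this
  simp only [sdiff_eq, compl_ofPred, not_not] at hfin
  exact hfin

section Moments

variable {ι : Type*} [Fintype ι]

theorem HasFPowerSeriesAt.coeff_mul_sum_mul_pow_eq_zero {𝕜 : Type*} [NontriviallyNormedField 𝕜]
    {f : 𝕜 → 𝕜} {p : FormalMultilinearSeries 𝕜 𝕜 𝕜} (hp : HasFPowerSeriesAt f p 0)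
    {c x : ι → 𝕜} (h : ∀ᶠ b in 𝓝 0, ∑ k, c k * f (b * x k) = 0) (n : ℕ) :
    p.coeff n * ∑ k, c k * x k ^ n = 0 := by
  have hsum : ∀ᶠ b in 𝓝 (0 : 𝕜), ∀ k, HasSum (fun n => (b * x k) ^ n • p.coeff n) (f (b * x k)) :=
    eventually_all.mpr fun k => by
      have hk : Tendsto (fun b : 𝕜 => b * x k) (𝓝 0) (𝓝 0) := by
        simpa using (continuous_mul_const (x k)).tendsto 0
      simpa only [zero_add] using hk.eventually (hasFPowerSeriesAt_iff.mp hp)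
  refine congrFun (eq_zero_of_eventually_hasSum_pow_smul_zero
    (a := fun n => p.coeff n * ∑ k, c k * x k ^ n) ?_) n
  filter_upwards [h, hsum] with b hb hbk
  rw [← hb]
  refine (hasSum_sum fun k _ => (hbk k).mul_left (c k)).congr_fun fun n => ?_
  simp only [smul_eq_mul, Finset.mul_sum, mul_pow]
  exact Finset.sum_congr rfl fun k _ => by ring

theorem tendsto_sum_mul_pow_div_pow {c x : ι → ℝ} {j : ι} (hj : x j ≠ 0)
    (hlt : ∀ k ≠ j, c k ≠ 0 → |x k| < |x j|) :
    Tendsto (fun n => (∑ k, c k * x k ^ n) / x j ^ n) atTop (𝓝 (c j)) := by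
  classical
  have hterm : ∀ k, Tendsto (fun n => c k * (x k / x j) ^ n) atTop
      (𝓝 (if k = j then c j else 0)) := by
    intro k
    by_cases hkj : k = j
    · subst hkj
      simp [div_self hj]
    by_cases hck : c k = 0
    · simp [hck, hkj]
    have hr : |x k / x j| < 1 := by
      rw [abs_div, div_lt_one (abs_pos.mpr hj)]
      exact hlt k hkj hck
    simpa [hkj] using (tendsto_pow_atTop_nhds_zero_of_abs_lt_one hr).const_mul (c k)
  convert tendsto_finsetSum Finset.univ fun k _ => hterm k using 1
  · ext n
    simp only [Finset.sum_div, div_pow, mul_div_assoc]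
  · simp

theorem eq_zero_of_sum_mul_pow_eq_zero {c x : ι → ℝ} (hx₀ : ∀ k, 0 ≤ x k) (hx : Injective x)
    {S : Set ℕ} (hS : S.Infinite) (h₀ : 0 ∈ S) (h : ∀ n ∈ S, ∑ k, c k * x k ^ n = 0) :
    c = 0 := by
  classical
  by_contra hc
  obtain ⟨j, hj, hjmax⟩ := Finset.exists_max_image {k | c k ≠ 0} x
    (Finset.filter_nonempty_iff.mpr (by simpa [funext_iff] using hc))
  simp only [Finset.mem_filter, Finset.mem_univ, true_and] at hj hjmax
  have hlt : ∀ k ≠ j, c k ≠ 0 → x k < x j := fun k hkj hck =>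
    lt_of_le_of_ne (hjmax k hck) (hx.ne hkj)
  rcases (hx₀ j).eq_or_lt with hxj | hxj
  · have hsingle : ∀ k ≠ j, c k = 0 := fun k hkj => by
      by_contra hck
      linarith [hlt k hkj hck, hx₀ k]
    have := h 0 h₀
    simp only [pow_zero, mul_one] at this
    rw [Finset.sum_eq_single j (fun k _ hkj => hsingle k hkj) (by simp)] at this
    exact hj this
  · have hlim := tendsto_sum_mul_pow_div_pow hxj.ne' fun k hkj hck => by
      rw [abs_of_nonneg (hx₀ k), abs_of_pos hxj]
      exact hlt k hkj hck
    have hfreq : ∃ᶠ n in atTop, (∑ k, c k * x k ^ n) / x j ^ n = 0 :=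
      (Nat.frequently_atTop_iff_infinite.mpr hS).mono fun n hn => by simp [h n hn]
    exact hj (tendsto_nhds_unique_of_frequently_eq hlim tendsto_const_nhds hfreq)

end Moments

theorem exists_linearIndependent_rat_of_countable {ι α M : Type*} [Fintype ι] [AddCommGroup M]
    [Module ℚ M] {f : ι → α → M} {U : Set α} (hU : ¬ U.Countable)
    (h : ∀ q : ι → ℚ, q ≠ 0 → {b ∈ U | ∑ k, q k • f k b = 0}.Countable) :
    ∃ b ∈ U, LinearIndependent ℚ fun k => f k b := by
  have hbad : (⋃ q ∈ {q : ι → ℚ | q ≠ 0}, {b ∈ U | ∑ k, q k • f k b = 0}).Countable :=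
    (to_countable _).biUnion h
  obtain ⟨b, hbU, hb⟩ := not_subset.mp fun hsub => hU (hbad.mono hsub)
  refine ⟨b, hbU, Fintype.linearIndependent_iff.mpr fun q hq => ?_⟩
  by_contra hne
  exact hb (mem_biUnion (x := q) (fun h => hne (by simp [h])) ⟨hbU, hq⟩)

theorem mul_mem_Icc_neg_one_one {a b : ℝ} (ha : a ∈ Icc (-1 : ℝ) 1) (hb : b ∈ Icc (-1 : ℝ) 1) :
    a * b ∈ Icc (-1 : ℝ) 1 := by
  refine abs_le.mp ?_
  rw [abs_mul]
  exact mul_le_one₀ (abs_le.mpr ha) (abs_nonneg b) (abs_le.mpr hb)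

theorem AnalyticOnNhd.sum_mul_comp_mul_Icc {ι : Type*} [Fintype ι] {σ : ℝ → ℝ}
    (hσ : AnalyticOnNhd ℝ σ (Icc (-1) 1)) (c : ι → ℝ) {x : ι → ℝ}
    (hx : ∀ k, x k ∈ Icc (-1 : ℝ) 1) :
    AnalyticOnNhd ℝ (fun b => ∑ k, c k * σ (b * x k)) (Icc (-1) 1) := fun _ hb =>
  Finset.analyticAt_fun_sum _ fun k _ => analyticAt_const.mul
    ((hσ _ (mul_mem_Icc_neg_one_one hb (hx k))).comp (f := fun y => y * x k)
      (analyticAt_id.mul analyticAt_const))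

theorem analytic_nonpolynomial_rationally_independent_values
    (σ : ℝ → ℝ)
    (hσ : AnalyticOnNhd ℝ σ (Set.Icc (-1 : ℝ) 1))
    (hσ0 : σ 0 ≠ 0)
    (hnotpoly : ¬ ∃ P : Polynomial ℝ, ∀ x ∈ Set.Icc (-1 : ℝ) 1, σ x = P.eval x)
    (N : ℕ) (x : Fin N → ℝ)
    (hx : ∀ k, x k ∈ Set.Icc (0 : ℝ) 1)
    (hmono : StrictMono x) :
    ∃ b ∈ Set.Icc (-1 : ℝ) 1, LinearIndependent ℚ (fun k => σ (b * x k)) := by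
  have h₀ : (0 : ℝ) ∈ Icc (-1 : ℝ) 1 := by norm_num
  obtain ⟨p, hp⟩ := hσ 0 h₀
  have hS := hσ.infinite_setOf_coeff_ne_zero isPreconnected_Icc h₀ hp hnotpoly
  have hS₀ : 0 ∈ {n | p.coeff n ≠ 0} := by
    simpa [← hp.coeff_zero 1] using hσ0
  refine exists_linearIndependent_rat_of_countable (by simp) fun q hq => ?_
  set c : Fin N → ℝ := fun k => q k
  have hg := hσ.sum_mul_comp_mul_Icc c fun k => Icc_subset_Icc (by norm_num) le_rfl (hx k)
  have hne : ¬ EqOn (fun b => ∑ k, c k * σ (b * x k)) 0 (Icc (-1) 1) := fun hzero => by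
    have hev : ∀ᶠ b in 𝓝 (0 : ℝ), ∑ k, c k * σ (b * x k) = 0 :=
      mem_of_superset (Icc_mem_nhds (by norm_num) (by norm_num)) hzero
    have hc : c = 0 := eq_zero_of_sum_mul_pow_eq_zero (fun k => (hx k).1) hmono.injective hS hS₀
      fun n hn => (mul_eq_zero.mp (hp.coeff_mul_sum_mul_pow_eq_zero hev n)).resolve_left hn
    exact hq (funext fun k => Rat.cast_eq_zero.mp (congrFun hc k))
  refine ((hg.finite_setOf_eq_zero isCompact_Icc isPreconnected_Icc hne).subset ?_).countable
  intro b ⟨hb, hsum⟩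
  exact ⟨hb, by simpa [Rat.smul_def] using hsum⟩
end
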